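/- arXiv:2405.08615 — 8 statements merged into one kernel-verified Lean document; each statement's English description precedes it below -/
import Mathlib

section
/- If x₁ and x₂ are elements of a complex unital Banach algebra A satisfying x₁x₂ = x₂x₁ = 0, and both x₁ and x₂ are Drazin invertible, then x₁ + x₂ is Drazin invertible with (x₁ + x₂)^d = x₁^d + x₂^d. -/
/-- `b` is a Drazin inverse of `a`. -/
def IsDrazinInverse {A : Type*} [Ring A] (a b : A) : Prop :=
  a * b = b * a ∧ b * a * b = b ∧ ∃ n : ℕ, (a * (1 - a * b)) ^ n = 0

private lemma add_pow_of_orthog {A : Type*} [Ring A] {u v : A}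
    (huv : u * v = 0) (hvu : v * u = 0) :
    ∀ k : ℕ, (u + v) ^ (k + 1) = u ^ (k + 1) + v ^ (k + 1) := by
  intro k
  induction k with
  | zero => simp
  | succ k ih =>
      rw [pow_succ, ih, add_mul, mul_add, mul_add]
      have h1 : v ^ (k + 1) * u = 0 := by
        rw [pow_succ, mul_assoc, hvu, mul_zero]
      have h2 : u ^ (k + 1) * v = 0 := by
        rw [pow_succ, mul_assoc, huv, mul_zero]
      rw [h1, h2, ← pow_succ, ← pow_succ]
      abel

theorem stmt_0 {A : Type*} [NormedRing A] [NormedAlgebra ℂ A] [CompleteSpace A]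
    (x₁ x₂ b₁ b₂ : A) (h12 : x₁ * x₂ = 0) (h21 : x₂ * x₁ = 0)
    (h1 : IsDrazinInverse x₁ b₁) (h2 : IsDrazinInverse x₂ b₂) :
    IsDrazinInverse (x₁ + x₂) (b₁ + b₂) := by
  obtain ⟨c1, d1, n₁, hn₁⟩ := h1
  obtain ⟨c2, d2, n₂, hn₂⟩ := h2
  have hb1 : b₁ = b₁ * b₁ * x₁ := by
    calc b₁ = b₁ * x₁ * b₁ := d1.symm
    _ = b₁ * b₁ * x₁ := by rw [mul_assoc, c1, ← mul_assoc]
  have hb1' : b₁ = x₁ * b₁ * b₁ := by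
    calc b₁ = b₁ * x₁ * b₁ := d1.symm
    _ = x₁ * b₁ * b₁ := by rw [← c1]
  have hb2 : b₂ = b₂ * b₂ * x₂ := by
    calc b₂ = b₂ * x₂ * b₂ := d2.symm
    _ = b₂ * b₂ * x₂ := by rw [mul_assoc, c2, ← mul_assoc]
  have hb2' : b₂ = x₂ * b₂ * b₂ := by
    calc b₂ = b₂ * x₂ * b₂ := d2.symm
    _ = x₂ * b₂ * b₂ := by rw [← c2]
  have b1x2 : b₁ * x₂ = 0 := by
    rw [hb1, mul_assoc, h12, mul_zero]
  have x2b1 : x₂ * b₁ = 0 := by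
    rw [hb1', ← mul_assoc, ← mul_assoc, h21, zero_mul, zero_mul]
  have b2x1 : b₂ * x₁ = 0 := by
    rw [hb2, mul_assoc, h21, mul_zero]
  have x1b2 : x₁ * b₂ = 0 := by
    rw [hb2', ← mul_assoc, ← mul_assoc, h12, zero_mul, zero_mul]
  have b1b2 : b₁ * b₂ = 0 := by
    rw [hb2', ← mul_assoc, ← mul_assoc, b1x2, zero_mul, zero_mul]
  have b2b1 : b₂ * b₁ = 0 := by
    rw [hb1', ← mul_assoc, ← mul_assoc, b2x1, zero_mul, zero_mul]
  refine ⟨?_, ?_, ?_⟩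
  · simp only [mul_add, add_mul, x1b2, x2b1, b1x2, b2x1, c1, c2, add_zero,
      zero_add]
  · simp only [mul_add, add_mul, b1x2, b2x1, b1b2, b2b1, zero_mul, mul_zero,
      add_zero, zero_add, d1, d2]
    rw [mul_assoc b₂, x2b1, mul_zero, add_zero, mul_assoc b₁, x1b2, mul_zero,
      zero_add]
  · set u := x₁ * (1 - x₁ * b₁) with hu
    set v := x₂ * (1 - x₂ * b₂) with hv
    have key : (x₁ + x₂) * (1 - (x₁ + x₂) * (b₁ + b₂)) = u + v := by
      rw [hu, hv, mul_sub, mul_sub, mul_sub, mul_one, mul_one, mul_one]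
      have expand : (x₁ + x₂) * ((x₁ + x₂) * (b₁ + b₂))
          = x₁ * (x₁ * b₁) + x₂ * (x₂ * b₂) := by
        simp only [mul_add, add_mul, ← mul_assoc, h12, h21, x1b2, x2b1,
          zero_mul, mul_zero, add_zero, zero_add]
      rw [expand]
      abel
    have huv : u * v = 0 := by
      have h1' : (1 - x₁ * b₁) * x₂ = x₂ := by
        rw [sub_mul, one_mul, mul_assoc, b1x2, mul_zero, sub_zero]
      rw [hu, hv, mul_assoc, ← mul_assoc (1 - x₁ * b₁), h1', ← mul_assoc, h12,
        zero_mul]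
    have hvu : v * u = 0 := by
      have h2' : (1 - x₂ * b₂) * x₁ = x₁ := by
        rw [sub_mul, one_mul, mul_assoc, b2x1, mul_zero, sub_zero]
      rw [hv, hu, mul_assoc, ← mul_assoc (1 - x₂ * b₂), h2', ← mul_assoc, h21,
        zero_mul]
    refine ⟨n₁ + n₂ + 1, ?_⟩
    rw [key, add_pow_of_orthog huv hvu]
    have hu0 : u ^ (n₁ + n₂ + 1) = 0 := by
      rw [show n₁ + n₂ + 1 = n₁ + (n₂ + 1) by ring, pow_add, hn₁, zero_mul]
    have hv0 : v ^ (n₁ + n₂ + 1) = 0 := by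
      rw [show n₁ + n₂ + 1 = n₂ + (n₁ + 1) by ring, pow_add, hn₂, zero_mul]
    rw [hu0, hv0, add_zero]
end

section
/- If x₁ and x₂ are elements of a complex unital Banach algebra A with x₁x₂ = 0, x₁ is Drazin invertible, and x₁ + x₂ is Drazin invertible, then x₂ is Drazin invertible with x₂^d = (x₁+x₂)^d - ((x₁+x₂)^d)² x₁. -/
private lemma powIdem {A : Type*} [Monoid A] (x : A) (h : x * x = x) :
    ∀ j : ℕ, x ^ (j + 1) = x := by
  intro j
  induction j with
  | zero => simp
  | succ k ih => rw [pow_succ, ih, h]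

/-- From the Drazin nilpotency condition, extract `a ^ (n+1) = a ^ (n+2) * s`. -/
private lemma nil_pow {A : Type*} [Ring A] (a s : A) (has : a * s = s * a)
    (hsas : s * a * s = s) (n : ℕ) (hn : (a * (1 - a * s)) ^ n = 0) :
    a ^ (n + 1) = a ^ (n + 1 + 1) * s := by
  have hx : a * s * (a * s) = a * s := by
    rw [mul_assoc, ← mul_assoc s a s, hsas]
  have he : (1 - a * s) * (1 - a * s) = 1 - a * s := by
    have hexp : (1 - a * s) * (1 - a * s) = 1 - a * s - a * s + a * s * (a * s) := by
      noncomm_ring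
    rw [hexp, hx]; noncomm_ring
  have hcomm : Commute a (1 - a * s) := by
    show a * (1 - a * s) = (1 - a * s) * a
    have h1 : a * (a * s) = a * s * a := by rw [mul_assoc, has]
    rw [mul_sub, sub_mul, mul_one, one_mul, h1]
  have h2 : (a * (1 - a * s)) ^ (n + 1) = 0 := by rw [pow_succ, hn, zero_mul]
  have h3 : a ^ (n + 1) * (1 - a * s) = 0 := by
    have hmp := hcomm.mul_pow (n + 1)
    rw [powIdem _ he n] at hmp
    rw [← hmp]; exact h2
  rw [mul_sub, mul_one] at h3
  have h4 : a ^ (n + 1) = a ^ (n + 1) * (a * s) := sub_eq_zero.mp h3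
  calc a ^ (n + 1) = a ^ (n + 1) * (a * s) := h4
  _ = a ^ (n + 1) * a * s := by rw [mul_assoc]
  _ = a ^ (n + 1 + 1) * s := by rw [← pow_succ]

theorem stmt_1 {A : Type*} [NormedRing A] [NormedAlgebra ℂ A] [CompleteSpace A]
    (x₁ x₂ b₁ s : A) (h12 : x₁ * x₂ = 0)
    (h1 : IsDrazinInverse x₁ b₁) (hs : IsDrazinInverse (x₁ + x₂) s) :
    IsDrazinInverse x₂ (s - s ^ 2 * x₁) := by
  obtain ⟨hpb, hbpb, m₀, hm₀⟩ := h1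
  obtain ⟨has, hsas, n₀, hn₀⟩ := hs
  set p := x₁ with hp
  set q := x₂ with hqdef
  set b := b₁ with hb
  set a := p + q with ha
  have hpq : p * q = 0 := h12
  have hCpb : Commute p b := hpb
  -- basic facts
  have hbbp : b * b * p = b := by rw [mul_assoc, ← hpb, ← mul_assoc, hbpb]
  have hbq : b * q = 0 := by
    calc b * q = b * b * p * q := by rw [hbbp]
    _ = b * b * (p * q) := by rw [mul_assoc]
    _ = 0 := by rw [hpq, mul_zero]
  have hba : b * a = b * p := by
    rw [ha, mul_add, hbq, add_zero]
  have haq : a * q = q * q := by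
    rw [ha, add_mul, hpq, zero_add]
  have hF0 : ∀ k : ℕ, p ^ (k + 1) * q = 0 := by
    intro k
    rw [pow_succ, mul_assoc, hpq, mul_zero]
  have hpa : ∀ k : ℕ, p ^ (k + 1) * a = p ^ (k + 1 + 1) := by
    intro k
    rw [ha, mul_add, hF0, add_zero, ← pow_succ]
  have hF5 : ∀ k : ℕ, p * a ^ k = p ^ (k + 1) := by
    intro k
    induction k with
    | zero => simp
    | succ j ih => rw [pow_succ, ← mul_assoc, ih, hpa]
  have hF2 : ∀ k : ℕ, b * a ^ (k + 1) = b * p ^ (k + 1) := by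
    intro k
    induction k with
    | zero => simpa using hba
    | succ j ih =>
      calc b * a ^ (j + 1 + 1) = b * a ^ (j + 1) * a := by rw [pow_succ, ← mul_assoc]
      _ = b * p ^ (j + 1) * a := by rw [ih]
      _ = b * (p ^ (j + 1) * a) := by rw [mul_assoc]
      _ = b * p ^ (j + 1 + 1) := by rw [hpa]
  have hF1 : ∀ k : ℕ, b ^ (k + 1) * p ^ k = b := by
    intro k
    induction k with
    | zero => simp
    | succ j ih =>
      calc b ^ (j + 1 + 1) * p ^ (j + 1) = (b ^ j * b * b) * (p * p ^ j) := by
            rw [pow_succ, pow_succ, pow_succ']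
      _ = b ^ j * (b * b * p) * p ^ j := by simp only [mul_assoc]
      _ = b ^ j * b * p ^ j := by rw [hbbp]
      _ = b ^ (j + 1) * p ^ j := by rw [← pow_succ]
      _ = b := ih
  have hass : a * s * s = s := by rw [has, hsas]
  have hF3 : ∀ k : ℕ, a ^ k * s ^ (k + 1) = s := by
    intro k
    induction k with
    | zero => simp
    | succ j ih =>
      calc a ^ (j + 1) * s ^ (j + 1 + 1) = (a * a ^ j) * (s ^ (j + 1) * s) := by
            rw [pow_succ' a j, pow_succ]
      _ = a * (a ^ j * s ^ (j + 1)) * s := by simp only [mul_assoc]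
      _ = a * s * s := by rw [ih]
      _ = s := hass
  have hF11 : ∀ k : ℕ, q ^ (k + 1) = a ^ k * q := by
    intro k
    induction k with
    | zero => simp
    | succ j ih =>
      rw [pow_succ, ih, mul_assoc, ← haq, ← mul_assoc, ← pow_succ]
  -- nilpotency consequences
  have hK : a ^ (n₀ + 1) = a ^ (n₀ + 1 + 1) * s := nil_pow a s has hsas n₀ hn₀
  have hM : p ^ (m₀ + 1) = p ^ (m₀ + 1 + 1) * b := nil_pow p b hpb hbpb m₀ hm₀
  -- (A) : b * s = b * b
  have hA : b * s = b * b := by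
    have step1 : b * b = b ^ (n₀ + 1 + 1 + 1) * p ^ (n₀ + 1) := by
      calc b * b = b * (b ^ (n₀ + 1 + 1) * p ^ (n₀ + 1)) := by rw [hF1 (n₀ + 1)]
      _ = (b * b ^ (n₀ + 1 + 1)) * p ^ (n₀ + 1) := by rw [mul_assoc]
      _ = b ^ (n₀ + 1 + 1 + 1) * p ^ (n₀ + 1) := by rw [← pow_succ']
    have step2 : b ^ (n₀ + 1 + 1 + 1) * p ^ (n₀ + 1) = b ^ (n₀ + 1 + 1 + 1) * a ^ (n₀ + 1) := by
      calc b ^ (n₀ + 1 + 1 + 1) * p ^ (n₀ + 1)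
          = b ^ (n₀ + 1 + 1) * (b * p ^ (n₀ + 1)) := by rw [pow_succ, mul_assoc]
      _ = b ^ (n₀ + 1 + 1) * (b * a ^ (n₀ + 1)) := by rw [← hF2 n₀]
      _ = b ^ (n₀ + 1 + 1 + 1) * a ^ (n₀ + 1) := by rw [← mul_assoc, ← pow_succ]
    have step3 : b ^ (n₀ + 1 + 1 + 1) * a ^ (n₀ + 1)
        = b ^ (n₀ + 1 + 1 + 1) * a ^ (n₀ + 1 + 1) * s := by
      rw [hK, mul_assoc]
    have step4 : b ^ (n₀ + 1 + 1 + 1) * a ^ (n₀ + 1 + 1)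
        = b ^ (n₀ + 1 + 1 + 1) * p ^ (n₀ + 1 + 1) := by
      calc b ^ (n₀ + 1 + 1 + 1) * a ^ (n₀ + 1 + 1)
          = b ^ (n₀ + 1 + 1) * (b * a ^ (n₀ + 1 + 1)) := by rw [pow_succ, mul_assoc]
      _ = b ^ (n₀ + 1 + 1) * (b * p ^ (n₀ + 1 + 1)) := by rw [hF2 (n₀ + 1)]
      _ = b ^ (n₀ + 1 + 1 + 1) * p ^ (n₀ + 1 + 1) := by rw [← mul_assoc, ← pow_succ]
    have step5 : b ^ (n₀ + 1 + 1 + 1) * p ^ (n₀ + 1 + 1) = b := hF1 (n₀ + 1 + 1)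
    rw [step1, step2, step3, step4, step5]
  -- (B) : p * s = p * b
  have hF6 : ∀ k : ℕ, p ^ (k + 1) * s ^ (k + 1) = p * s := by
    intro k
    calc p ^ (k + 1) * s ^ (k + 1) = p * a ^ k * s ^ (k + 1) := by rw [← hF5]
    _ = p * (a ^ k * s ^ (k + 1)) := by rw [mul_assoc]
    _ = p * s := by rw [hF3]
  have hG : p * s = b * p * (p * s) := by
    have h1 : p ^ (m₀ + 1 + 1) = b * p ^ (m₀ + 1 + 1 + 1) := by
      calc p ^ (m₀ + 1 + 1) = p * p ^ (m₀ + 1) := pow_succ' p (m₀ + 1)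
      _ = p * (p ^ (m₀ + 1 + 1) * b) := by rw [hM]
      _ = p * p ^ (m₀ + 1 + 1) * b := by rw [mul_assoc]
      _ = p ^ (m₀ + 1 + 1 + 1) * b := by rw [← pow_succ']
      _ = b * p ^ (m₀ + 1 + 1 + 1) := (hCpb.pow_left (m₀ + 1 + 1 + 1)).eq
    calc p * s = p ^ (m₀ + 1 + 1) * s ^ (m₀ + 1 + 1) := (hF6 (m₀ + 1)).symm
    _ = b * p ^ (m₀ + 1 + 1 + 1) * s ^ (m₀ + 1 + 1) := by rw [h1]
    _ = b * p * (p ^ (m₀ + 1 + 1) * s ^ (m₀ + 1 + 1)) := by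
          rw [pow_succ' p (m₀ + 1 + 1)]; simp only [mul_assoc]
    _ = b * p * (p * s) := by rw [hF6]
  have hF9 : ∀ j : ℕ, (b * p) ^ j * (p * s) = p * s := by
    intro j
    induction j with
    | zero => simp
    | succ i ih =>
      rw [pow_succ, mul_assoc, ← hG]
      exact ih
  have hpbidem : p * b * (p * b) = p * b := by
    rw [mul_assoc, ← mul_assoc b p b, hbpb]
  have hbpM : (b * p) ^ (m₀ + 1) = b ^ (m₀ + 1) * p ^ (m₀ + 1) := hCpb.symm.mul_pow (m₀ + 1)
  have hB : p * s = p * b := by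
    have h2 : p ^ (m₀ + 1 + 1) * b = p ^ (m₀ + 1) := by rw [hM]
    have h3 : p ^ (m₀ + 1 + 1 + 1) * b = p ^ (m₀ + 1 + 1) := by
      calc p ^ (m₀ + 1 + 1 + 1) * b = p * p ^ (m₀ + 1 + 1) * b := by rw [pow_succ' p (m₀ + 1 + 1)]
      _ = p * (p ^ (m₀ + 1 + 1) * b) := by rw [mul_assoc]
      _ = p * p ^ (m₀ + 1) := by rw [h2]
      _ = p ^ (m₀ + 1 + 1) := by rw [← pow_succ']
    calc p * s = (b * p) ^ (m₀ + 1) * (p * s) := (hF9 (m₀ + 1)).symm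
    _ = b ^ (m₀ + 1) * (p ^ (m₀ + 1) * p * s) := by rw [hbpM]; simp only [mul_assoc]
    _ = b ^ (m₀ + 1) * (p ^ (m₀ + 1 + 1) * s) := by rw [← pow_succ]
    _ = b ^ (m₀ + 1) * (p ^ (m₀ + 1 + 1 + 1) * b * s) := by rw [← h3]
    _ = b ^ (m₀ + 1) * (p ^ (m₀ + 1 + 1 + 1) * (b * b)) := by rw [mul_assoc, hA]
    _ = b ^ (m₀ + 1) * (p ^ (m₀ + 1 + 1 + 1) * b * b) := by rw [← mul_assoc (p ^ (m₀ + 1 + 1 + 1)) b b]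
    _ = b ^ (m₀ + 1) * (p ^ (m₀ + 1 + 1) * b) := by rw [h3]
    _ = b ^ (m₀ + 1) * (p ^ (m₀ + 1) * (p * b)) := by rw [pow_succ p (m₀ + 1), mul_assoc]
    _ = b ^ (m₀ + 1) * p ^ (m₀ + 1) * (p * b) := by rw [← mul_assoc]
    _ = (b * p) ^ (m₀ + 1) * (p * b) := by rw [← hbpM]
    _ = (p * b) ^ (m₀ + 1) * (p * b) := by rw [hpb.symm]
    _ = (p * b) ^ (m₀ + 1 + 1) := by rw [← pow_succ]
    _ = p * b := powIdem _ hpbidem (m₀ + 1)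
  -- core identities
  have hssa : s * s * a = s := by
    rw [mul_assoc, ← has, ← mul_assoc, hsas]
  have hqap : q = a - p := by rw [ha]; noncomm_ring
  have hc0 : s - s ^ 2 * p = s * s * q := by
    rw [hqap, mul_sub, hssa, sq]
  have hpsq : p * s * q = 0 := by
    rw [hB, mul_assoc, hbq, mul_zero]
  have hpssq : p * (s * s * q) = 0 := by
    calc p * (s * s * q) = p * s * (s * q) := by simp only [mul_assoc]
    _ = p * b * (s * q) := by rw [hB]
    _ = p * (b * s) * q := by simp only [mul_assoc]
    _ = p * (b * b) * q := by rw [hA]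
    _ = p * b * (b * q) := by simp only [mul_assoc]
    _ = 0 := by rw [hbq, mul_zero]
  have hqc : q * (s * s * q) = s * q := by
    have h1 : q * (s * s * q) = a * (s * s * q) - p * (s * s * q) := by
      rw [hqap]; noncomm_ring
    rw [h1, hpssq, sub_zero, ← mul_assoc, ← mul_assoc, hass]
  have hcq : s * s * q * q = s * q := by
    rw [mul_assoc, ← haq, ← mul_assoc, hssa]
  -- assemble
  rw [hc0]
  refine ⟨?_, ?_, n₀ + 1 + 1, ?_⟩
  · rw [hqc, hcq]
  · rw [hcq, mul_assoc, hqc, ← mul_assoc]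
  · have h1 : q * (s * q) = s * q * q := by
      calc q * (s * q) = a * (s * q) - p * (s * q) := by rw [hqap]; noncomm_ring
      _ = a * (s * q) - 0 := by rw [← mul_assoc p s q, hpsq]
      _ = s * a * q - 0 := by rw [← mul_assoc a s q, has]
      _ = s * (q * q) - 0 := by rw [mul_assoc s a q, haq]
      _ = s * q * q := by rw [sub_zero, ← mul_assoc]
    have hqcidem : (q * (s * s * q)) * (q * (s * s * q)) = q * (s * s * q) := by
      calc (q * (s * s * q)) * (q * (s * s * q))
          = q * (s * s * q * q * (s * s * q)) := by simp only [mul_assoc]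
      _ = q * (s * q * (s * s * q)) := by rw [hcq]
      _ = q * (s * (q * (s * s * q))) := by rw [mul_assoc s q (s * s * q)]
      _ = q * (s * (s * q)) := by rw [hqc]
      _ = q * (s * s * q) := by rw [← mul_assoc s s q]
    have huidem : (1 - q * (s * s * q)) * (1 - q * (s * s * q)) = 1 - q * (s * s * q) := by
      have hexp : (1 - q * (s * s * q)) * (1 - q * (s * s * q))
          = 1 - q * (s * s * q) - q * (s * s * q) + (q * (s * s * q)) * (q * (s * s * q)) := by
        noncomm_ring
      rw [hexp, hqcidem]; noncomm_ring
    have hcommq : Commute q (1 - q * (s * s * q)) := by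
      show q * (1 - q * (s * s * q)) = (1 - q * (s * s * q)) * q
      rw [mul_sub, sub_mul, mul_one, one_mul, hqc, h1]
    have hsplit : (q * (1 - q * (s * s * q))) ^ (n₀ + 1 + 1)
        = q ^ (n₀ + 1 + 1) * (1 - q * (s * s * q)) := by
      rw [hcommq.mul_pow (n₀ + 1 + 1), powIdem _ huidem (n₀ + 1)]
    have h2 : q ^ (n₀ + 1 + 1) * (q * (s * s * q)) = a ^ (n₀ + 1) * q := by
      calc q ^ (n₀ + 1 + 1) * (q * (s * s * q))
          = q ^ (n₀ + 1 + 1) * q * (s * s * q) := by rw [← mul_assoc]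
      _ = q ^ (n₀ + 1 + 1 + 1) * (s * s * q) := by rw [← pow_succ]
      _ = a ^ (n₀ + 1 + 1) * q * (s * s * q) := by rw [hF11 (n₀ + 1 + 1)]
      _ = a ^ (n₀ + 1 + 1) * (q * (s * s * q)) := by rw [mul_assoc]
      _ = a ^ (n₀ + 1 + 1) * (s * q) := by rw [hqc]
      _ = a ^ (n₀ + 1 + 1) * s * q := by rw [← mul_assoc]
      _ = a ^ (n₀ + 1) * q := by rw [← hK]
    rw [hsplit]
    calc q ^ (n₀ + 1 + 1) * (1 - q * (s * s * q))
        = q ^ (n₀ + 1 + 1) - q ^ (n₀ + 1 + 1) * (q * (s * s * q)) := by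
          rw [mul_sub, mul_one]
    _ = a ^ (n₀ + 1) * q - a ^ (n₀ + 1) * q := by rw [h2, hF11 (n₀ + 1)]
    _ = 0 := sub_self _
end

section
/- Let x₁, x₂ be elements of a complex unital Banach algebra A and α ∈ ℂ with α ≠ 0 such that x₁x₂ = α(x₁ + x₂). If x₁ is Drazin invertible and x₁ + x₂ is Drazin invertible, then x₂ is Drazin invertible with x₂^d = (1/α)·(x₁+x₂)^d·x₁. -/
namespace IsDrazinInverse

variable {R : Type*} [Ring R] {a b : R}

theorem commute (h : IsDrazinInverse a b) : Commute a b := h.1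

theorem mul_mul_eq_self (h : IsDrazinInverse a b) : b * (a * b) = b := by
  rw [← mul_assoc, h.2.1]

theorem mul_mul_eq_self' (h : IsDrazinInverse a b) : a * b * b = b := by
  rw [h.commute.eq, h.2.1]

theorem isIdempotentElem (h : IsDrazinInverse a b) : IsIdempotentElem (a * b) := by
  rw [IsIdempotentElem, mul_assoc, h.mul_mul_eq_self]

theorem commute_one_sub (h : IsDrazinInverse a b) : Commute a (1 - a * b) :=
  (Commute.one_right a).sub_right ((Commute.refl a).mul_right h.commute)

theorem pow_mul_pow (h : IsDrazinInverse a b) {k : ℕ} (hk : k ≠ 0) : b ^ k * a ^ k = a * b := by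
  rw [← h.commute.symm.mul_pow, ← h.commute.eq, h.isIdempotentElem.pow_eq hk]

theorem exists_pow_mul_one_sub_eq_zero (h : IsDrazinInverse a b) :
    ∃ N, ∀ k, N ≤ k → a ^ k * (1 - a * b) = 0 := by
  obtain ⟨n, hn⟩ := h.2.2
  refine ⟨n + 1, fun k hk => ?_⟩
  obtain ⟨j, rfl⟩ := Nat.exists_eq_add_of_le hk
  rw [← h.isIdempotentElem.one_sub.pow_eq (by omega : n + 1 + j ≠ 0),
    ← h.commute_one_sub.mul_pow, add_assoc, pow_add, hn, zero_mul]

theorem commute_of_commute (h : IsDrazinInverse a b) {c : R} (hc : Commute c a) :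
    Commute c b := by
  obtain ⟨N, hN⟩ := h.exists_pow_mul_one_sub_eq_zero
  obtain ⟨k, hk, hpow⟩ : ∃ k, k ≠ 0 ∧ a ^ k = a ^ (k + 1) * b := by
    refine ⟨N + 1, by omega, ?_⟩
    have := hN (N + 1) (by omega)
    rwa [mul_sub, mul_one, sub_eq_zero, ← mul_assoc, ← pow_succ] at this
  have hck : ∀ j x, c * (a ^ j * x) = a ^ j * (c * x) := fun j x => by
    rw [← mul_assoc, (hc.pow_right j).eq, mul_assoc]
  have hb : b = b ^ (k + 1) * a ^ k := by
    rw [pow_succ', mul_assoc, h.pow_mul_pow hk, h.mul_mul_eq_self]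
  have hbc : b * c = a * b * (c * b) := by
    calc b * c = b ^ (k + 1) * (a ^ k * c) := by rw [← mul_assoc, ← hb]
      _ = b ^ (k + 1) * (a ^ (k + 1) * (c * b)) := by rw [← (hc.pow_right k).eq, hpow, hck]
      _ = a * b * (c * b) := by rw [← mul_assoc, h.pow_mul_pow (by omega)]
  have hcb : c * b = b * c * (a * b) := by
    have hb' : b = a ^ k * b ^ (k + 1) := by rw [(h.commute.pow_pow _ _).eq, ← hb]
    calc c * b = a ^ k * (c * b ^ (k + 1)) := by rw [← hck, ← hb']
      _ = b * (c * (a ^ (k + 1) * b ^ (k + 1))) := by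
          rw [hpow, (h.commute.pow_left _).eq, mul_assoc, hck]
      _ = b * c * (a * b) := by
          rw [(h.commute.pow_pow _ _).eq, h.pow_mul_pow (by omega), mul_assoc]
  refine (?_ : b * c = c * b).symm
  calc b * c = a * b * b * c * (a * b) := by rw [hbc, hcb]; simp only [mul_assoc]
    _ = c * b := by rw [h.mul_mul_eq_self', hcb]

theorem exists_mul_sub_one_mul_eq (h : IsDrazinInverse a b) :
    ∃ y, y * (a - 1) * (1 - a * b) = 1 - a * b := by
  obtain ⟨N, hN⟩ := h.exists_pow_mul_one_sub_eq_zero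
  refine ⟨-∑ i ∈ Finset.range N, a ^ i, ?_⟩
  rw [neg_mul, geom_sum_mul, neg_sub, sub_mul, one_mul, hN N le_rfl, sub_zero]

theorem smul {K : Type*} [Field K] [Algebra K R] (h : IsDrazinInverse a b) {c : K} (hc : c ≠ 0) :
    IsDrazinInverse (c • a) (c⁻¹ • b) := by
  have hab : c • a * c⁻¹ • b = a * b := by
    rw [smul_mul_smul_comm, mul_inv_cancel₀ hc, one_smul]
  have hba : c⁻¹ • b * c • a = b * a := by
    rw [smul_mul_smul_comm, inv_mul_cancel₀ hc, one_smul]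
  obtain ⟨h1, h2, n, hn⟩ := h
  refine ⟨by rw [hab, hba, h1], by rw [hba, mul_smul_comm, h2], n, ?_⟩
  rw [hab, smul_mul_assoc, smul_pow, hn, smul_zero]

theorem mul_mul_one_sub_eq_zero_of_mul_self_eq_mul {d u w s : R} (he : IsDrazinInverse a d)
    (hw : IsDrazinInverse w s) (hu : Commute a u) (h : a * a = u * w) :
    a * d * (1 - w * s) = 0 := by
  obtain ⟨N, hN⟩ := hw.exists_pow_mul_one_sub_eq_zero
  have hpow : ∀ k, (a * a) ^ k = u ^ k * w ^ k := by
    intro k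
    induction k with
    | zero => simp
    | succ k ih =>
      rw [pow_succ', ih, ← mul_assoc, ((hu.mul_left hu).pow_right k).eq, h, pow_succ, pow_succ']
      simp only [mul_assoc]
  calc a * d * (1 - w * s) = d ^ (2 * (N + 1)) * a ^ (2 * (N + 1)) * (1 - w * s) := by
        rw [he.pow_mul_pow (by omega)]
    _ = d ^ (2 * (N + 1)) * u ^ (N + 1) * (w ^ (N + 1) * (1 - w * s)) := by
        rw [pow_mul a, sq, hpow]; simp only [mul_assoc]
    _ = 0 := by rw [hN (N + 1) (by omega), mul_zero]

end IsDrazinInverse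

theorem eq_zero_of_eq_mul_sub {R : Type*} [Ring R] {n c z s : R} (hn : IsNilpotent n)
    (hc : Commute n c) (h : z = n * (z - c * z * s)) : z = 0 := by
  obtain ⟨m, hm⟩ := hn
  have hdvd : ∀ j, ∃ x, z = n ^ j * x := by
    intro j
    induction j with
    | zero => exact ⟨z, by rw [pow_zero, one_mul]⟩
    | succ j ih =>
      obtain ⟨x, hx⟩ := ih
      refine ⟨x - c * x * s, ?_⟩
      conv_lhs => rw [h, hx]
      rw [← mul_assoc c, ← (hc.pow_left j).eq, mul_assoc (n ^ j), mul_assoc (n ^ j), ← mul_sub,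
        ← mul_assoc, ← pow_succ']
  obtain ⟨x, hx⟩ := hdvd m
  rw [hx, hm, zero_mul]

section MulEqAdd

variable {R : Type*} [Ring R] {e f d s : R}

theorem sub_one_mul_sub_one_eq_one (h : e * f = e + f) : (e - 1) * (f - 1) = 1 := by
  rw [show (e - 1) * (f - 1) = e * f - e - f + 1 by noncomm_ring, h]; abel

theorem sub_one_mul_add_eq_mul_self (h : e * f = e + f) : (e - 1) * (e + f) = e * e := by
  rw [sub_mul, mul_add, h, one_mul]; abel

theorem one_sub_mul_mul_eq_zero (h : e * f = e + f) (he : IsDrazinInverse e d)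
    (hw : IsDrazinInverse (e + f) s) : (1 - e * d) * s = 0 := by
  have hq : e * (1 - e * d) * (1 - e * d) = e * (1 - e * d) := by
    rw [mul_assoc, he.isIdempotentElem.one_sub.eq]
  refine eq_zero_of_eq_mul_sub (s := s) he.2.2
    ((Commute.refl e).mul_left he.commute_one_sub.symm) ?_
  calc (1 - e * d) * s = (1 - e * d) * e * f * (s * s) := by
        rw [mul_assoc (1 - e * d) e, h, mul_assoc, ← mul_assoc (e + f), hw.mul_mul_eq_self']
    _ = e * (1 - e * d) * ((e + f) * (s * s) - e * (s * s)) := by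
        rw [← he.commute_one_sub.eq]; noncomm_ring
    _ = e * (1 - e * d) * ((1 - e * d) * s - e * ((1 - e * d) * s) * s) := by
        have hqs : (1 - e * d) * s - e * ((1 - e * d) * s) * s = (1 - e * d) * (s - e * s * s) := by
          rw [← mul_assoc e, he.commute_one_sub.eq, mul_assoc (1 - e * d) e, mul_assoc (1 - e * d),
            mul_sub]
        rw [hqs, ← mul_assoc _ (1 - e * d), hq, ← mul_assoc (e + f), hw.mul_mul_eq_self',
          mul_assoc e s s]

theorem add_mul_eq_mul_of_mul_eq_add (h : e * f = e + f) (he : IsDrazinInverse e d)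
    (hw : IsDrazinInverse (e + f) s) : (e + f) * s = e * d := by
  have hle : e * d * (1 - (e + f) * s) = 0 :=
    he.mul_mul_one_sub_eq_zero_of_mul_self_eq_mul hw
      ((Commute.refl e).sub_right (Commute.one_right e)) (sub_one_mul_add_eq_mul_self h).symm
  have hge : (1 - e * d) * ((e + f) * s) = 0 := by
    rw [hw.commute.eq, ← mul_assoc, one_sub_mul_mul_eq_zero h he hw, zero_mul]
  rw [← sub_eq_zero]
  calc (e + f) * s - e * d = (1 - e * d) * ((e + f) * s) - e * d * (1 - (e + f) * s) := by
        noncomm_ring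
    _ = 0 := by rw [hle, hge, sub_zero]

theorem exists_mul_sub_one_eq_one (h : e * f = e + f) (he : IsDrazinInverse e d)
    (hw : IsDrazinInverse (e + f) s) : ∃ y, y * (e - 1) = 1 := by
  obtain ⟨y, hy⟩ := he.exists_mul_sub_one_mul_eq
  have hP := add_mul_eq_mul_of_mul_eq_add h he hw
  have hcorner : (e + f) * (d * d) * (e - 1) * (e * d) = e * d := by
    calc (e + f) * (d * d) * (e - 1) * (e * d)
        = (e + f) * (d * d * ((e - 1) * (e + f))) * s := by rw [← hP]; simp only [mul_assoc]
      _ = (e + f) * ((e + f) * s) * s := by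
          rw [sub_one_mul_add_eq_mul_self h, ← sq, ← sq, he.pow_mul_pow two_ne_zero, hP]
      _ = e * d := by rw [mul_assoc, hw.mul_mul_eq_self', hP]
  have hc : Commute (e * d) (e - 1) :=
    ((Commute.refl e).mul_left he.commute.symm).sub_right (Commute.one_right _)
  refine ⟨(e + f) * (d * d) * (e * d) + y * (1 - e * d), ?_⟩
  rw [add_mul, mul_assoc _ (e * d), hc.eq, ← mul_assoc, hcorner, mul_assoc y,
    ((Commute.one_left _).sub_left hc).eq, ← mul_assoc, hy, add_sub_cancel]

theorem commute_of_mul_eq_add (h : e * f = e + f) (he : IsDrazinInverse e d)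
    (hw : IsDrazinInverse (e + f) s) : Commute e f := by
  obtain ⟨y, hy⟩ := exists_mul_sub_one_eq_one h he hw
  have hvu : (f - 1) * (e - 1) = 1 := by
    rwa [← left_inv_eq_right_inv hy (sub_one_mul_sub_one_eq_one h)]
  calc e * f = e + f := h
    _ = f * e := by
      rw [show f * e = (f - 1) * (e - 1) + e + f - 1 by noncomm_ring, hvu]; abel

theorem IsDrazinInverse.of_mul_eq_add (h : e * f = e + f) (he : IsDrazinInverse e d)
    (hw : IsDrazinInverse (e + f) s) : IsDrazinInverse f (s * e) := by
  have hef := commute_of_mul_eq_add h he hw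
  have hP := add_mul_eq_mul_of_mul_eq_add h he hw
  have hwe : Commute (e + f) e := (Commute.refl e).add_left hef.symm
  have hsf : Commute s f := (hw.commute_of_commute (hef.symm.add_right (Commute.refl f))).symm
  have hfb : f * (s * e) = (e + f) * s := by
    rw [← mul_assoc, ← hsf.eq, mul_assoc, ← hef.eq, h, hw.commute.eq]
  have hbf : s * e * f = (e + f) * s := by rw [mul_assoc, h, hw.commute.eq]
  refine ⟨by rw [hfb, hbf], by rw [hbf, ← mul_assoc, hw.mul_mul_eq_self'], ?_⟩
  have hsplit : f * (1 - (e + f) * s) = (e + f) * (1 - e * d) - e * (1 - e * d) := by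
    rw [hP]; noncomm_ring
  have hwq : Commute (e + f) (1 - e * d) := hP ▸ hw.commute_one_sub
  rw [hfb, hsplit]
  exact Commute.isNilpotent_sub
    ((hwe.mul_right hwq).mul_left (he.commute_one_sub.symm.mul_right (Commute.refl _)))
    (hP ▸ hw.2.2) he.2.2

end MulEqAdd

theorem stmt_2_general {A : Type*} [NormedRing A] [NormedAlgebra ℂ A]
    (x₁ x₂ b₁ s : A) (α : ℂ) (hα : α ≠ 0) (h12 : x₁ * x₂ = α • (x₁ + x₂))
    (h1 : IsDrazinInverse x₁ b₁) (hs : IsDrazinInverse (x₁ + x₂) s) :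
    IsDrazinInverse x₂ (α⁻¹ • (s * x₁)) := by
  have hα' : α⁻¹ ≠ 0 := inv_ne_zero hα
  have h : α⁻¹ • x₁ * α⁻¹ • x₂ = α⁻¹ • x₁ + α⁻¹ • x₂ := by
    rw [smul_mul_smul_comm, h12, smul_smul, ← smul_add, mul_assoc, inv_mul_cancel₀ hα, mul_one]
  have hw : IsDrazinInverse (α⁻¹ • x₁ + α⁻¹ • x₂) (α⁻¹⁻¹ • s) := by
    rw [← smul_add]; exact hs.smul hα'
  have hx₂ := (IsDrazinInverse.of_mul_eq_add h (h1.smul hα') hw).smul hα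
  rwa [smul_smul, mul_inv_cancel₀ hα, one_smul, smul_mul_smul_comm, inv_mul_cancel₀ hα',
    one_smul] at hx₂

theorem stmt_2 {A : Type*} [NormedRing A] [NormedAlgebra ℂ A] [CompleteSpace A]
    (x₁ x₂ b₁ s : A) (α : ℂ) (hα : α ≠ 0) (h12 : x₁ * x₂ = α • (x₁ + x₂))
    (h1 : IsDrazinInverse x₁ b₁) (hs : IsDrazinInverse (x₁ + x₂) s) :
    IsDrazinInverse x₂ (α⁻¹ • (s * x₁)) :=
  stmt_2_general x₁ x₂ b₁ s α hα h12 h1 hs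
end

section
/- Let x₁, x₂ be elements of a complex unital Banach algebra A and α ∈ ℂ such that x₁x₂ = α(x₁ + x₂). If x₁ and x₂ are both Drazin invertible, then x₁ + x₂ is Drazin invertible. -/
open Filter Metric Set Topology Asymptotics

/-- `a` is Drazin invertible. -/
def DrazinInvertible {A : Type*} [Ring A] (a : A) : Prop :=
  ∃ b : A, IsDrazinInverse a b

lemma final_algebra {A : Type*} [Ring A] (z : A) (m' : ℕ) (s : ℕ → A)
    (h0r : s 0 * z = z ^ (m' + 1)) (h0l : z * s 0 = z ^ (m' + 1))
    (hr : ∀ j, s (j + 1) * z = s j) (hl : ∀ j, z * s (j + 1) = s j)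
    (hp : ∀ j, s j * s 0 = z ^ (m' + 1) * s (j + 1)) : DrazinInvertible z := by
  have hcomm : ∀ j, z * s j = s j * z := by
    rintro (_ | j)
    · rw [h0l, h0r]
    · rw [hl j, hr j]
  have hzpow : ∀ i j, z ^ i * s (j + i) = s j := by
    intro i
    induction i with
    | zero => intro j; simp
    | succ i ih =>
      intro j
      have : z ^ (i + 1) * s (j + (i + 1)) = z ^ i * (z * s (j + i + 1)) := by
        rw [pow_succ, mul_assoc]
        ring_nf
      rw [this, hl (j + i), ih j]
  have hsum : ∀ b a, s a * s b = s (a + b) * s 0 := by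
    intro b
    induction b with
    | zero => intro a; simp
    | succ b ih =>
      intro a
      have h1 : s a * s (b + 1) = s (a + 1) * s b := by
        rw [← hl a, ← hl b, hcomm (a + 1), mul_assoc]
      have h2 : a + 1 + b = a + (b + 1) := by omega
      rw [h1, ih (a + 1), h2]
  refine ⟨s (m' + 1), ?_, ?_, ?_⟩
  · exact hcomm (m' + 1)
  · -- s (m'+1) * z * s (m'+1) = s (m'+1)
    rw [hr m']
    calc s m' * s (m' + 1) = s (m' + (m' + 1)) * s 0 := hsum (m' + 1) m'
      _ = z ^ (m' + 1) * s (m' + (m' + 1) + 1) := hp _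
      _ = s (m' + 1) := by
          have := hzpow (m' + 1) (m' + 1)
          rwa [show m' + 1 + (m' + 1) = m' + (m' + 1) + 1 by omega] at this
  · refine ⟨m' + 1, ?_⟩
    have he : z * s (m' + 1) = s m' := hl m'
    have hee : s m' * s m' = s m' := by
      calc s m' * s m' = s (m' + m') * s 0 := hsum m' m'
        _ = z ^ (m' + 1) * s (m' + m' + 1) := hp _
        _ = s m' := by
            have := hzpow (m' + 1) m'
            rwa [show m' + (m' + 1) = m' + m' + 1 by omega] at this
    rw [he]
    have hcome : (1 - s m') * z = z * (1 - s m') := by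
      rw [sub_mul, mul_sub, one_mul, mul_one, hcomm m']
    have hidem : (1 - s m') * (1 - s m') = 1 - s m' := by
      rw [sub_mul, one_mul, mul_sub, mul_one, hee]
      abel
    have claim : ∀ i, (z * (1 - s m')) ^ (i + 1) = z ^ (i + 1) * (1 - s m') := by
      intro i
      induction i with
      | zero => simp
      | succ i ih =>
        rw [pow_succ (z * (1 - s m')) (i + 1), ih, pow_succ z (i + 1)]
        calc z ^ (i + 1) * (1 - s m') * (z * (1 - s m'))
            = z ^ (i + 1) * ((1 - s m') * z) * (1 - s m') := by
              rw [mul_assoc, mul_assoc, mul_assoc]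
          _ = z ^ (i + 1) * z * ((1 - s m') * (1 - s m')) := by
              rw [hcome, mul_assoc, mul_assoc, mul_assoc]
          _ = z ^ (i + 1) * z * (1 - s m') := by rw [hidem]
    rw [claim m']
    have hz1 : z ^ (m' + 1) * s m' = z ^ (m' + 1) := by
      have h1 : z ^ (m' + 1) * s m' = z * (z ^ m' * s (0 + m')) := by
        rw [pow_succ']
        rw [mul_assoc]
        norm_num
      rw [h1, hzpow m' 0, h0l]
    rw [mul_sub, mul_one, hz1, sub_self]

section Main

variable {A : Type*} [NormedRing A] [NormedAlgebra ℂ A] [CompleteSpace A]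


lemma drazin_resolvent (x d : A) (k : ℕ) (hc : x * d = d * x) (hb : d * x * d = d)
    (hn : (x * (1 - x * d)) ^ (k + 1) = 0) :
    ∃ δ > 0, ∃ C > 0, ∀ μ : ℂ, μ ≠ 0 → ‖μ‖ < δ →
      ∃ y : A, (x - μ • 1) * y = 1 ∧ y * (x - μ • 1) = 1 ∧ ‖y‖ ≤ C / ‖μ‖ ^ (k + 1) := by
  classical
  obtain ⟨e, he⟩ : ∃ e' : A, e' = x * d := ⟨_, rfl⟩
  rw [← he] at hn
  have hed : e * d = d := by rw [he, hc]; exact hb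
  have hde : d * e = d := by rw [he, ← mul_assoc]; exact hb
  have hex : e * x = x * e := by rw [he, mul_assoc, ← hc, ← mul_assoc]
  have hee : e * e = e := by rw [he, mul_assoc, ← mul_assoc d x d, hb]
  have hcomm1e : x * (1 - e) = (1 - e) * x := by
    rw [mul_sub, sub_mul, mul_one, one_mul, hex]
  have hcom : Commute (1 - e) x := hcomm1e.symm
  have hnil : (1 - e) * x ^ (k + 1) = 0 := by
    have h1 : (x * (1 - e)) ^ (k + 1) = x ^ (k + 1) * (1 - e) ^ (k + 1) :=
      (hcom.symm).mul_pow (k + 1)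
    have hidem : ∀ n : ℕ, (1 - e) ^ (n + 1) = 1 - e := by
      intro n
      induction n with
      | zero => simp
      | succ n ih =>
        rw [pow_succ, ih, sub_mul, one_mul, mul_sub, mul_one, hee]
        abel
    have hidem := hidem k
    have h2 : x ^ (k + 1) * (1 - e) = 0 := by rw [← hidem, ← h1, hn]
    rw [(hcom.pow_right (k + 1)).eq, h2]
  set B : ℝ := ‖(1 : A)‖ + 1 with hB
  have hB1 : 1 ≤ B := by
    have := norm_nonneg (1 : A); linarith
  set Cs : ℝ := ∑ n ∈ Finset.range (k + 1), ‖(1 - e) * x ^ n‖ with hCs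
  have hCs0 : 0 ≤ Cs := Finset.sum_nonneg fun _ _ => norm_nonneg _
  have hdB : 0 ≤ ‖d‖ * B := mul_nonneg (norm_nonneg d) (by linarith)
  refine ⟨min (1 / (2 * ‖d‖ + 2)) 1, by positivity, ‖d‖ * B + Cs + 1, by positivity, ?_⟩
  intro μ hμ0 hμδ
  have hμpos : 0 < ‖μ‖ := norm_pos_iff.mpr hμ0
  have hμ1 : ‖μ‖ < 1 := lt_of_lt_of_le hμδ (min_le_right _ _)
  have hμd : ‖μ • d‖ ≤ 1 / 2 := by
    have h1 : ‖μ‖ < 1 / (2 * ‖d‖ + 2) := lt_of_lt_of_le hμδ (min_le_left _ _)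
    have h2 : ‖μ • d‖ ≤ ‖μ‖ * ‖d‖ := by rw [norm_smul]
    have h3 : ‖μ‖ * ‖d‖ ≤ 1 / (2 * ‖d‖ + 2) * ‖d‖ :=
      mul_le_mul_of_nonneg_right h1.le (norm_nonneg d)
    have h4 : 1 / (2 * ‖d‖ + 2) * ‖d‖ ≤ 1 / 2 := by
      rw [div_mul_eq_mul_div, div_le_div_iff₀ (by positivity) (by norm_num)]
      nlinarith [norm_nonneg d]
    linarith
  have hμd1 : ‖μ • d‖ < 1 := lt_of_le_of_lt hμd (by norm_num)
  set u : Aˣ := Units.oneSub (μ • d) hμd1 with hu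
  have huval : (u : A) = 1 - μ • d := rfl
  have huinv : ((u⁻¹ : Aˣ) : A) = ∑' n : ℕ, (μ • d) ^ n := rfl
  set y : A := d * ((u⁻¹ : Aˣ) : A)
      - ∑ n ∈ Finset.range (k + 1), (μ ^ (n + 1))⁻¹ • ((1 - e) * x ^ n) with hy
  have hscal : ∀ n : ℕ, μ * (μ ^ (n + 1))⁻¹ = (μ ^ n)⁻¹ := by
    intro n
    rw [pow_succ']
    field_simp
  have hterm : ∀ n : ℕ, (x - μ • 1) * ((μ ^ (n + 1))⁻¹ • ((1 - e) * x ^ n))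
      = (μ ^ (n + 1))⁻¹ • ((1 - e) * x ^ (n + 1)) - (μ ^ n)⁻¹ • ((1 - e) * x ^ n) := by
    intro n
    rw [sub_mul, mul_smul_comm, smul_mul_assoc, one_mul, smul_smul, hscal]
    have h1 : x * ((1 - e) * x ^ n) = (1 - e) * x ^ (n + 1) := by
      rw [← mul_assoc, hcomm1e, mul_assoc, ← pow_succ']
    rw [h1]
  have htermr : ∀ n : ℕ, ((μ ^ (n + 1))⁻¹ • ((1 - e) * x ^ n)) * (x - μ • 1)
      = (μ ^ (n + 1))⁻¹ • ((1 - e) * x ^ (n + 1)) - (μ ^ n)⁻¹ • ((1 - e) * x ^ n) := by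
    intro n
    rw [mul_sub, smul_mul_assoc, mul_smul_comm, mul_one, smul_smul, hscal]
    have h1 : (1 - e) * x ^ n * x = (1 - e) * x ^ (n + 1) := by
      rw [mul_assoc, ← pow_succ]
    rw [h1]
  have hsumtel : ∑ n ∈ Finset.range (k + 1),
      ((μ ^ (n + 1))⁻¹ • ((1 - e) * x ^ (n + 1)) - (μ ^ n)⁻¹ • ((1 - e) * x ^ n))
      = - (1 - e) := by
    rw [Finset.sum_range_sub (fun n => (μ ^ n)⁻¹ • ((1 - e) * x ^ n)), hnil]
    simp
  have hXd : (x - μ • 1) * d = e * (u : A) := by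
    rw [huval, sub_mul, smul_mul_assoc, one_mul, mul_sub, mul_one, mul_smul_comm, hed, ← he]
  have hdX : d * (x - μ • 1) = e * (u : A) := by
    rw [huval, mul_sub, mul_smul_comm, mul_one, ← hc, ← he, mul_sub, mul_one, mul_smul_comm, hed]
  have key1 : (x - μ • 1) * (d * ((u⁻¹ : Aˣ) : A)) = e := by
    rw [← mul_assoc, hXd, mul_assoc, Units.mul_inv, mul_one]
  have hcommuinv : Commute (x - μ • 1) ((u⁻¹ : Aˣ) : A) := by
    have h1 : Commute (x - μ • 1) ((u : Aˣ) : A) := by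
      rw [huval]
      have hxd : Commute (x - μ • 1) d :=
        Commute.sub_left hc ((Commute.one_left d).smul_left μ)
      exact (Commute.one_right _).sub_right (hxd.smul_right μ)
    exact h1.units_inv_right
  have key2 : (d * ((u⁻¹ : Aˣ) : A)) * (x - μ • 1) = e := by
    rw [mul_assoc, ← hcommuinv.eq, ← mul_assoc, hdX, mul_assoc, Units.mul_inv, mul_one]
  have hsum2 : ∑ n ∈ Finset.range (k + 1),
      (x - μ • 1) * ((μ ^ (n + 1))⁻¹ • ((1 - e) * x ^ n)) = -(1 - e) := by
    rw [Finset.sum_congr rfl fun n _ => hterm n, hsumtel]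
  have hsum3 : ∑ n ∈ Finset.range (k + 1),
      ((μ ^ (n + 1))⁻¹ • ((1 - e) * x ^ n)) * (x - μ • 1) = -(1 - e) := by
    rw [Finset.sum_congr rfl fun n _ => htermr n, hsumtel]
  refine ⟨y, ?_, ?_, ?_⟩
  · rw [hy, mul_sub, Finset.mul_sum, key1, hsum2]
    abel
  · rw [hy, sub_mul, Finset.sum_mul, key2, hsum3]
    abel
  · have hnormuinv : ‖((u⁻¹ : Aˣ) : A)‖ ≤ B := by
      rw [huinv]
      have h1 := tsum_geometric_le_of_norm_lt_one (μ • d) hμd1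
      have h2 : (1 - ‖μ • d‖)⁻¹ ≤ (1 / 2 : ℝ)⁻¹ := by
        apply inv_anti₀ (by norm_num)
        linarith
      rw [hB]
      norm_num at h2
      linarith
    have hnorm1 : ‖d * ((u⁻¹ : Aˣ) : A)‖ ≤ ‖d‖ * B :=
      (norm_mul_le _ _).trans (mul_le_mul_of_nonneg_left hnormuinv (norm_nonneg d))
    have ht0 : 0 < ‖μ‖ ^ (k + 1) := pow_pos hμpos _
    have ht1 : ‖μ‖ ^ (k + 1) ≤ 1 := pow_le_one₀ (norm_nonneg _) hμ1.le
    have hnormsum : ‖∑ n ∈ Finset.range (k + 1), (μ ^ (n + 1))⁻¹ • ((1 - e) * x ^ n)‖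
        ≤ Cs / ‖μ‖ ^ (k + 1) := by
      refine (norm_sum_le _ _).trans ?_
      rw [hCs, Finset.sum_div]
      refine Finset.sum_le_sum fun n hn => ?_
      rw [norm_smul, norm_inv, norm_pow]
      rw [div_eq_inv_mul]
      apply mul_le_mul_of_nonneg_right _ (norm_nonneg _)
      apply inv_anti₀ ht0
      apply pow_le_pow_of_le_one (norm_nonneg _) hμ1.le
      simp at hn
      omega
    calc ‖y‖ ≤ ‖d * ((u⁻¹ : Aˣ) : A)‖
          + ‖∑ n ∈ Finset.range (k + 1), (μ ^ (n + 1))⁻¹ • ((1 - e) * x ^ n)‖ := norm_sub_le _ _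
      _ ≤ ‖d‖ * B + Cs / ‖μ‖ ^ (k + 1) := add_le_add hnorm1 hnormsum
      _ ≤ (‖d‖ * B + Cs + 1) / ‖μ‖ ^ (k + 1) := by
          rw [le_div_iff₀ ht0, add_mul, div_mul_cancel₀ _ (ne_of_gt ht0)]
          nlinarith
set_option linter.unusedSectionVars false in
lemma sum_res_core (x₁ x₂ : A) (α lam mu : ℂ) (h12 : x₁ * x₂ = α • (x₁ + x₂))
    (hroot : mu ^ 2 = lam * (mu - α)) (hμα : mu ≠ α) (y₁ y₂ : A)
    (hy₁l : (x₁ - mu • 1) * y₁ = 1) (hy₁r : y₁ * (x₁ - mu • 1) = 1)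
    (hy₂l : (x₂ - mu • 1) * y₂ = 1) (hy₂r : y₂ * (x₂ - mu • 1) = 1) :
    ((x₁ + x₂) - lam • 1) * ((α - mu) • (y₂ * y₁)) = 1 ∧
      ((α - mu) • (y₂ * y₁)) * ((x₁ + x₂) - lam • 1) = 1 := by
  have hfact : (x₁ - mu • 1) * (x₂ - mu • 1) = (α - mu) • ((x₁ + x₂) - lam • 1) := by
    have expand : (x₁ - mu • 1) * (x₂ - mu • 1)
        = x₁ * x₂ - mu • x₂ - mu • x₁ + (mu * mu) • (1 : A) := by
      simp only [sub_mul, mul_sub, smul_sub, smul_mul_assoc, mul_smul_comm, one_mul, mul_one,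
        smul_smul]
      abel
    have hsc : (α - mu) * lam = -(mu * mu) := by linear_combination hroot
    rw [expand, h12, smul_sub, smul_smul, hsc]
    module
  have hαμ : α - mu ≠ 0 := sub_ne_zero.mpr (Ne.symm hμα)
  constructor
  · have h1 : ((x₁ + x₂) - lam • 1) * ((α - mu) • (y₂ * y₁))
        = (α - mu)⁻¹ • (((α - mu) • ((x₁ + x₂) - lam • 1)) * ((α - mu) • (y₂ * y₁))) := by
      rw [smul_mul_assoc, smul_smul, inv_mul_cancel₀ hαμ, one_smul]
    rw [h1, ← hfact, mul_smul_comm, smul_smul, inv_mul_cancel₀ hαμ, one_smul]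
    calc (x₁ - mu • 1) * (x₂ - mu • 1) * (y₂ * y₁)
        = (x₁ - mu • 1) * ((x₂ - mu • 1) * y₂) * y₁ := by
          rw [mul_assoc, mul_assoc, mul_assoc]
      _ = 1 := by rw [hy₂l, mul_one, hy₁l]
  · have h1 : ((α - mu) • (y₂ * y₁)) * ((x₁ + x₂) - lam • 1)
        = (α - mu)⁻¹ • (((α - mu) • (y₂ * y₁)) * ((α - mu) • ((x₁ + x₂) - lam • 1))) := by
      rw [mul_smul_comm, smul_smul, inv_mul_cancel₀ hαμ, one_smul]
    rw [h1, ← hfact]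
    calc (α - mu)⁻¹ • ((α - mu) • (y₂ * y₁) * ((x₁ - mu • 1) * (x₂ - mu • 1)))
        = (α - mu)⁻¹ • ((α - mu) • (y₂ * (y₁ * (x₁ - mu • 1)) * (x₂ - mu • 1))) := by
          rw [smul_mul_assoc, mul_assoc, mul_assoc, mul_assoc]
      _ = 1 := by
          rw [hy₁r, mul_one, hy₂r, smul_smul, inv_mul_cancel₀ hαμ, one_smul]

lemma sum_resolvent (x₁ x₂ : A) (α : ℂ) (h12 : x₁ * x₂ = α • (x₁ + x₂))
    (d₁ : A) (k₁ : ℕ) (hc₁ : x₁ * d₁ = d₁ * x₁) (hb₁ : d₁ * x₁ * d₁ = d₁)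
    (hn₁ : (x₁ * (1 - x₁ * d₁)) ^ (k₁ + 1) = 0)
    (d₂ : A) (k₂ : ℕ) (hc₂ : x₂ * d₂ = d₂ * x₂) (hb₂ : d₂ * x₂ * d₂ = d₂)
    (hn₂ : (x₂ * (1 - x₂ * d₂)) ^ (k₂ + 1) = 0) :
    ∃ δ : ℝ, 0 < δ ∧ δ ≤ 1 ∧ ∃ C : ℝ, ∀ lam : ℂ, lam ≠ 0 → ‖lam‖ < δ →
      ∃ R : A, ((x₁ + x₂) - lam • 1) * R = 1 ∧ R * ((x₁ + x₂) - lam • 1) = 1 ∧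
        ‖R‖ ≤ C / ‖lam‖ ^ ((k₂ + 1) + (k₁ + 1)) := by
  obtain ⟨δ₁, hδ₁, C₁, hC₁, hres₁⟩ := drazin_resolvent x₁ d₁ k₁ hc₁ hb₁ hn₁
  obtain ⟨δ₂, hδ₂, C₂, hC₂, hres₂⟩ := drazin_resolvent x₂ d₂ k₂ hc₂ hb₂ hn₂
  set m : ℕ := (k₂ + 1) + (k₁ + 1) with hm
  set δ' : ℝ := min (min δ₁ δ₂) 1 with hδ'
  have hδ'0 : 0 < δ' := lt_min (lt_min hδ₁ hδ₂) one_pos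
  have hδ'1 : δ' ≤ 1 := min_le_right _ _
  -- a uniform "choose mu" statement
  have key : ∃ δ : ℝ, 0 < δ ∧ δ ≤ δ' ∧ ∀ lam : ℂ, lam ≠ 0 → ‖lam‖ < δ →
      ∃ mu : ℂ, mu ≠ 0 ∧ mu ≠ α ∧ mu ^ 2 = lam * (mu - α) ∧ ‖mu‖ < δ' ∧ ‖lam‖ ≤ ‖mu‖ := by
    rcases eq_or_ne α 0 with hα | hα
    · refine ⟨δ', hδ'0, le_refl _, fun lam hl0 hlδ => ⟨lam, hl0, ?_, ?_, hlδ, le_refl _⟩⟩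
      · rw [hα]; exact hl0
      · rw [hα]; ring
    · set a : ℝ := ‖α‖ with ha
      have ha0 : 0 < a := norm_pos_iff.mpr hα
      set δ'' : ℝ := min δ' (a / 2) with hδ''
      have hδ''0 : 0 < δ'' := lt_min hδ'0 (by positivity)
      set δ : ℝ := min (δ'' / 2) (δ'' ^ 2 / (2 * a + 1)) with hδdef
      have hδ0 : 0 < δ := lt_min (by positivity) (by positivity)
      refine ⟨δ, hδ0, ?_, ?_⟩
      · calc δ ≤ δ'' / 2 := min_le_left _ _
          _ ≤ δ' := by
            have := min_le_left δ' (a / 2)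
            linarith
      intro lam hl0 hlδ
      have hlpos : 0 < ‖lam‖ := norm_pos_iff.mpr hl0
      have hlm1 : ‖lam‖ < δ'' / 2 := lt_of_lt_of_le hlδ (min_le_left _ _)
      have hlm2 : ‖lam‖ * (2 * a + 1) < δ'' ^ 2 := by
        have h := lt_of_lt_of_le hlδ (min_le_right _ _)
        exact (lt_div_iff₀ (by positivity)).mp h
      obtain ⟨w, hw⟩ := IsAlgClosed.exists_pow_nat_eq (k := ℂ) (lam ^ 2 - 4 * (lam * α)) (n := 2) (by norm_num)
      set mu : ℂ := (lam + w) / 2 with hmu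
      have hroot : mu ^ 2 = lam * (mu - α) := by
        rw [hmu]
        linear_combination hw / 4
      have hμ0 : mu ≠ 0 := by
        intro h
        rw [h] at hroot
        have : lam * α = 0 := by linear_combination hroot
        exact mul_ne_zero hl0 hα this
      have hμα : mu ≠ α := by
        intro h
        rw [h] at hroot
        have : α ^ 2 = 0 := by linear_combination hroot
        exact hα ((pow_eq_zero_iff (n := 2) (by norm_num)).mp this)
      have hμpos : 0 < ‖mu‖ := norm_pos_iff.mpr hμ0
      have hnorm_eq : ‖mu‖ ^ 2 = ‖lam‖ * ‖mu - α‖ := by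
        rw [← norm_pow, hroot, norm_mul]
      have hμδ'' : ‖mu‖ < δ'' := by
        by_contra hcon
        push_neg at hcon
        have h1 : ‖mu - α‖ ≤ ‖mu‖ + a := norm_sub_le mu α
        have h2 : ‖mu‖ ^ 2 ≤ ‖lam‖ * (‖mu‖ + a) := by
          rw [hnorm_eq]
          exact mul_le_mul_of_nonneg_left h1 (norm_nonneg lam)
        have h3 : δ'' * ‖mu‖ ≤ ‖mu‖ * ‖mu‖ :=
          mul_le_mul_of_nonneg_right hcon (norm_nonneg mu)
        have h4 : (δ'' - ‖lam‖) * ‖mu‖ ≤ ‖lam‖ * a := by nlinarith [h2, h3]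
        have h5 : (δ'' / 2) * δ'' ≤ (δ'' - ‖lam‖) * ‖mu‖ := by
          apply mul_le_mul (by linarith) hcon (le_of_lt hδ''0) (by linarith)
        nlinarith [h4, h5, hlm2, hlpos]
      have hlmμ : ‖lam‖ ≤ ‖mu‖ := by
        have h3 : a - ‖mu‖ ≤ ‖mu - α‖ := by
          have := norm_sub_norm_le α mu
          rw [norm_sub_rev] at this
          linarith
        have h4 : ‖mu‖ < a / 2 := lt_of_lt_of_le hμδ'' (min_le_right _ _)
        have h5 : ‖lam‖ < a / 2 := by
          have : δ'' / 2 ≤ a / 2 := by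
            have := min_le_right δ' (a / 2)
            linarith
          linarith
        by_contra hcon
        push_neg at hcon
        have h6 : ‖lam‖ * (a - ‖mu‖) ≤ ‖mu‖ ^ 2 := by
          rw [hnorm_eq]
          exact mul_le_mul_of_nonneg_left h3 (norm_nonneg lam)
        nlinarith [h6, mul_lt_mul_of_pos_left hcon hlpos, mul_lt_mul_of_pos_left h5 hlpos]
      exact ⟨mu, hμ0, hμα, hroot, lt_of_lt_of_le hμδ'' (min_le_left _ _), hlmμ⟩
  obtain ⟨δ, hδ0, hδδ', hkey⟩ := key
  refine ⟨δ, hδ0, le_trans hδδ' hδ'1, (‖α‖ + 1) * (C₂ * C₁), ?_⟩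
  intro lam hl0 hlδ
  obtain ⟨mu, hμ0, hμα, hroot, hμδ', hlmμ⟩ := hkey lam hl0 hlδ
  have hμ1 : ‖mu‖ < 1 := lt_of_lt_of_le hμδ' (min_le_right _ _)
  have hμδ₁ : ‖mu‖ < δ₁ := lt_of_lt_of_le hμδ' (le_trans (min_le_left _ _) (min_le_left _ _))
  have hμδ₂ : ‖mu‖ < δ₂ := lt_of_lt_of_le hμδ' (le_trans (min_le_left _ _) (min_le_right _ _))
  obtain ⟨y₁, hy₁l, hy₁r, hy₁n⟩ := hres₁ mu hμ0 hμδ₁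
  obtain ⟨y₂, hy₂l, hy₂r, hy₂n⟩ := hres₂ mu hμ0 hμδ₂
  obtain ⟨hl, hr⟩ := sum_res_core x₁ x₂ α lam mu h12 hroot hμα y₁ y₂ hy₁l hy₁r hy₂l hy₂r
  refine ⟨(α - mu) • (y₂ * y₁), hl, hr, ?_⟩
  have hμpos : 0 < ‖mu‖ := norm_pos_iff.mpr hμ0
  have hlmpos : 0 < ‖lam‖ := norm_pos_iff.mpr hl0
  have h1 : ‖(α - mu) • (y₂ * y₁)‖ ≤ (‖α‖ + 1) * (‖y₂‖ * ‖y₁‖) := by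
    rw [norm_smul]
    apply mul_le_mul _ (norm_mul_le _ _) (norm_nonneg _) (by positivity)
    calc ‖α - mu‖ ≤ ‖α‖ + ‖mu‖ := norm_sub_le _ _
      _ ≤ ‖α‖ + 1 := by linarith
  have h2 : ‖y₂‖ * ‖y₁‖ ≤ (C₂ * C₁) / ‖lam‖ ^ m := by
    have h3 : ‖y₂‖ * ‖y₁‖ ≤ (C₂ / ‖mu‖ ^ (k₂ + 1)) * (C₁ / ‖mu‖ ^ (k₁ + 1)) :=
      mul_le_mul hy₂n hy₁n (norm_nonneg _) (by positivity)
    have h4 : (C₂ / ‖mu‖ ^ (k₂ + 1)) * (C₁ / ‖mu‖ ^ (k₁ + 1)) = (C₂ * C₁) / ‖mu‖ ^ m := by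
      rw [div_mul_div_comm, ← pow_add]
    have h5 : (C₂ * C₁) / ‖mu‖ ^ m ≤ (C₂ * C₁) / ‖lam‖ ^ m := by
      apply div_le_div_of_nonneg_left (by positivity) (by positivity)
      exact pow_le_pow_left₀ (norm_nonneg _) hlmμ m
    linarith
  calc ‖(α - mu) • (y₂ * y₁)‖ ≤ (‖α‖ + 1) * (‖y₂‖ * ‖y₁‖) := h1
    _ ≤ (‖α‖ + 1) * ((C₂ * C₁) / ‖lam‖ ^ m) := by
        apply mul_le_mul_of_nonneg_left h2 (by positivity)
    _ = (‖α‖ + 1) * (C₂ * C₁) / ‖lam‖ ^ m := by ring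


lemma abstract_core (z : A) (m' : ℕ) (δ C : ℝ) (hδ0 : 0 < δ) (hδ1 : δ ≤ 1)
    (hres : ∀ lam : ℂ, lam ≠ 0 → ‖lam‖ < δ → ∃ R : A,
      (z - lam • 1) * R = 1 ∧ R * (z - lam • 1) = 1 ∧ ‖R‖ ≤ C / ‖lam‖ ^ (m' + 1)) :
    DrazinInvertible z := by
  classical
  set M : ℕ := m' + 1 with hM
  -- commutation of z - lam•1 with powers of z
  have hUzp : ∀ (lam : ℂ) (j : ℕ), (z - lam • 1) * z ^ j = z ^ j * (z - lam • 1) := by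
    intro lam j
    have hcz : Commute (z - lam • 1) z := by
      have h1 : (z - lam • 1) * z = z * z - lam • z := by
        rw [sub_mul, smul_mul_assoc, one_mul]
      have h2 : z * (z - lam • 1) = z * z - lam • z := by
        rw [mul_sub, mul_smul_comm, mul_one]
      rw [Commute, SemiconjBy, h1, h2]
    exact (hcz.pow_right j).eq
  -- the basic facts about the resolvent
  have hRf : ∀ lam : ℂ, lam ≠ 0 → ‖lam‖ < δ →
      (z - lam • 1) * Ring.inverse (z - lam • 1) = 1 ∧
      Ring.inverse (z - lam • 1) * (z - lam • 1) = 1 ∧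
      ‖Ring.inverse (z - lam • 1)‖ ≤ C / ‖lam‖ ^ M ∧ IsUnit (z - lam • 1) := by
    intro lam h0 hd
    obtain ⟨R, h1, h2, h3⟩ := hres lam h0 hd
    have hinv : Ring.inverse (z - lam • 1) = R := by
      have : z - lam • 1 = ((⟨z - lam • 1, R, h1, h2⟩ : Aˣ) : A) := rfl
      rw [this, Ring.inverse_unit]
      rfl
    rw [hinv]
    exact ⟨h1, h2, h3, ⟨⟨z - lam • 1, R, h1, h2⟩, rfl⟩⟩
  set h : ℂ → A := fun t => z ^ M * Ring.inverse (z - t • 1) with hh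
  have hzRf : ∀ lam : ℂ, lam ≠ 0 → ‖lam‖ < δ →
      z * Ring.inverse (z - lam • 1) = 1 + lam • Ring.inverse (z - lam • 1) := by
    intro lam h0 hd
    have hz : z = (z - lam • 1) + lam • 1 := by abel
    calc z * Ring.inverse (z - lam • 1)
        = ((z - lam • 1) + lam • 1) * Ring.inverse (z - lam • 1) := by rw [← hz]
      _ = (z - lam • 1) * Ring.inverse (z - lam • 1)
          + lam • Ring.inverse (z - lam • 1) := by
          rw [add_mul, smul_mul_assoc, one_mul]
      _ = 1 + lam • Ring.inverse (z - lam • 1) := by rw [(hRf lam h0 hd).1]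
  have hexp : ∀ lam : ℂ, lam ≠ 0 → ‖lam‖ < δ → ∀ j : ℕ,
      z ^ j * Ring.inverse (z - lam • 1) =
        (∑ i ∈ Finset.range j, lam ^ i • z ^ (j - (i + 1)))
          + lam ^ j • Ring.inverse (z - lam • 1) := by
    intro lam h0 hd j
    induction j with
    | zero => simp
    | succ j ih =>
      have hstep : z ^ (j + 1) * Ring.inverse (z - lam • 1)
          = z * (z ^ j * Ring.inverse (z - lam • 1)) := by
        rw [pow_succ', mul_assoc]
      rw [hstep, ih, mul_add, Finset.mul_sum, mul_smul_comm, hzRf lam h0 hd]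
      rw [Finset.sum_range_succ]
      have hterm : ∀ i ∈ Finset.range j,
          z * (lam ^ i • z ^ (j - (i + 1))) = lam ^ i • z ^ (j + 1 - (i + 1)) := by
        intro i hi
        simp only [Finset.mem_range] at hi
        rw [mul_smul_comm]
        congr 1
        rw [← pow_succ']
        congr 1
        omega
      rw [Finset.sum_congr rfl hterm]
      have : (lam ^ j • (1 + lam • Ring.inverse (z - lam • 1)))
          = lam ^ j • (1 : A) + lam ^ (j + 1) • Ring.inverse (z - lam • 1) := by
        rw [smul_add, smul_smul, ← pow_succ]
      rw [this]
      have h1j : j + 1 - (j + 1) = 0 := by omega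
      rw [h1j, pow_zero]
      abel
  set D : ℝ := (∑ i ∈ Finset.range M, ‖z ^ (M - (i + 1))‖) + |C| with hD
  have hbdd : ∀ lam : ℂ, lam ≠ 0 → ‖lam‖ < δ → ‖h lam‖ ≤ D := by
    intro lam h0 hd
    have hlpos : 0 < ‖lam‖ := norm_pos_iff.mpr h0
    have hl1 : ‖lam‖ ≤ 1 := le_trans hd.le hδ1
    rw [hh]
    simp only []
    rw [hexp lam h0 hd M]
    refine (norm_add_le _ _).trans ?_
    rw [hD]
    have hs : ‖∑ i ∈ Finset.range M, lam ^ i • z ^ (M - (i + 1))‖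
        ≤ ∑ i ∈ Finset.range M, ‖z ^ (M - (i + 1))‖ := by
      refine (norm_sum_le _ _).trans ?_
      refine Finset.sum_le_sum fun i _ => ?_
      rw [norm_smul, norm_pow]
      calc ‖lam‖ ^ i * ‖z ^ (M - (i + 1))‖ ≤ 1 * ‖z ^ (M - (i + 1))‖ := by
            apply mul_le_mul_of_nonneg_right _ (norm_nonneg _)
            exact pow_le_one₀ (norm_nonneg _) hl1
        _ = ‖z ^ (M - (i + 1))‖ := one_mul _
    have hr : ‖lam ^ M • Ring.inverse (z - lam • 1)‖ ≤ |C| := by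
      rw [norm_smul, norm_pow]
      calc ‖lam‖ ^ M * ‖Ring.inverse (z - lam • 1)‖
          ≤ ‖lam‖ ^ M * (C / ‖lam‖ ^ M) := by
            apply mul_le_mul_of_nonneg_left (hRf lam h0 hd).2.2.1 (by positivity)
        _ = C := by rw [mul_comm, div_mul_cancel₀ _ (ne_of_gt (pow_pos hlpos M))]
        _ ≤ |C| := le_abs_self C
    linarith
  have hdiff : DifferentiableOn ℂ h (ball 0 δ \ {0}) := by
    intro t ht
    obtain ⟨htb, htn⟩ := ht
    have ht0 : t ≠ 0 := htn
    have htδ : ‖t‖ < δ := by rwa [mem_ball_zero_iff] at htb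
    apply DifferentiableAt.differentiableWithinAt
    apply DifferentiableAt.const_mul
    have hinner : DifferentiableAt ℂ (fun u : ℂ => z - u • 1) t :=
      (differentiableAt_const z).sub (differentiableAt_id.smul_const (1 : A))
    exact (differentiableAt_inverse (𝕜 := ℂ) (hRf t ht0 htδ).2.2.2).comp t hinner
  -- the sequence of functions
  set S : ℕ → ℂ → A := fun j => Nat.rec
    (Function.update h 0 (limUnder (𝓝[≠] (0 : ℂ)) h))
    (fun _ Sj => Function.update (fun t => t⁻¹ • (Sj t - Sj 0)) 0
      (limUnder (𝓝[≠] (0 : ℂ)) (fun t => t⁻¹ • (Sj t - Sj 0)))) j with hS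
  have hS0def : S 0 = Function.update h 0 (limUnder (𝓝[≠] (0 : ℂ)) h) := rfl
  have hSsuccdef : ∀ j, S (j + 1) = Function.update (fun t => t⁻¹ • (S j t - S j 0)) 0
      (limUnder (𝓝[≠] (0 : ℂ)) (fun t => t⁻¹ • (S j t - S j 0))) := fun j => rfl
  have hS0 : ∀ t : ℂ, t ≠ 0 → S 0 t = h t := by
    intro t ht
    rw [hS0def]
    exact Function.update_of_ne ht _ _
  have hSsucc : ∀ (j : ℕ) (t : ℂ), t ≠ 0 → S (j + 1) t = t⁻¹ • (S j t - S j 0) := by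
    intro j t ht
    rw [hSsuccdef j]
    exact Function.update_of_ne ht _ _
  set s : ℕ → A := fun j => S j 0 with hs
  set tf : ℕ → A := fun j => Nat.rec (z ^ M) (fun i _ => s i) j with htf
  have htf0 : tf 0 = z ^ M := rfl
  have htfsucc : ∀ j, tf (j + 1) = s j := fun j => rfl
  -- helper for limits
  have hev : ∀ (p : ℂ → A) (c : A), (∀ lam : ℂ, lam ≠ 0 → ‖lam‖ < δ → p lam = c) →
      ContinuousAt p 0 → p 0 = c := by
    intro p c hpc hcont
    have hball : ∀ᶠ t in 𝓝 (0 : ℂ), ‖t‖ < δ := by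
      have : Tendsto (fun t : ℂ => ‖t‖) (𝓝 0) (𝓝 ‖(0 : ℂ)‖) := continuous_norm.continuousAt
      rw [norm_zero] at this
      exact this.eventually_lt_const hδ0
    have h1 : Tendsto p (𝓝[≠] (0 : ℂ)) (𝓝 (p 0)) :=
      hcont.tendsto.mono_left nhdsWithin_le_nhds
    have h2 : Tendsto p (𝓝[≠] (0 : ℂ)) (𝓝 c) := by
      refine Tendsto.congr' ?_ tendsto_const_nhds
      have hev1 : ∀ᶠ t in 𝓝[≠] (0 : ℂ), ‖t‖ < δ := hball.filter_mono nhdsWithin_le_nhds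
      have hev2 : ∀ᶠ t in 𝓝[≠] (0 : ℂ), t ≠ 0 := eventually_mem_nhdsWithin
      filter_upwards [hev1, hev2] with t h1t h2t
      exact (hpc t h2t h1t).symm
    exact tendsto_nhds_unique h1 h2
  have hUcont : Continuous (fun t : ℂ => z - t • 1) :=
    continuous_const.sub (continuous_id.smul continuous_const)
  have hU0 : (fun t : ℂ => z - t • 1) 0 = z := by simp
  -- main induction
  have main : ∀ j : ℕ,
      (∃ ρ : ℝ, 0 < ρ ∧ ρ ≤ δ ∧ DifferentiableOn ℂ (S j) (ball 0 ρ)) ∧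
      (∀ lam : ℂ, lam ≠ 0 → ‖lam‖ < δ →
        S j lam * (z - lam • 1) = tf j ∧ (z - lam • 1) * S j lam = tf j) ∧
      (s j * z = tf j ∧ z * s j = tf j) ∧
      (tf j * s 0 = z ^ M * s j) := by
    intro j
    induction j with
    | zero =>
      have hPdiff : DifferentiableOn ℂ (S 0) (ball 0 δ) := by
        rw [hS0def]
        apply Complex.differentiableOn_update_limUnder_of_bddAbove (ball_mem_nhds 0 hδ0) hdiff
        refine ⟨D, ?_⟩
        rintro - ⟨t, ⟨htb, htn⟩, rfl⟩
        exact hbdd t htn (by rwa [mem_ball_zero_iff] at htb)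
      have hPU : ∀ lam : ℂ, lam ≠ 0 → ‖lam‖ < δ →
          S 0 lam * (z - lam • 1) = tf 0 ∧ (z - lam • 1) * S 0 lam = tf 0 := by
        intro lam h0 hd
        rw [hS0 lam h0, htf0, hh]
        constructor
        · rw [mul_assoc, (hRf lam h0 hd).2.1, mul_one]
        · rw [← mul_assoc, hUzp lam M, mul_assoc, (hRf lam h0 hd).1, mul_one]
      have hScont : ContinuousAt (S 0) 0 :=
        (hPdiff.differentiableAt (isOpen_ball.mem_nhds (mem_ball_self hδ0))).continuousAt
      have hPz : s 0 * z = tf 0 ∧ z * s 0 = tf 0 := by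
        constructor
        · have := hev (fun t => S 0 t * (z - t • 1)) (tf 0)
            (fun lam h0 hd => (hPU lam h0 hd).1)
            (hScont.mul (hUcont.continuousAt))
          simpa using this
        · have := hev (fun t => (z - t • 1) * S 0 t) (tf 0)
            (fun lam h0 hd => (hPU lam h0 hd).2)
            ((hUcont.continuousAt).mul hScont)
          simpa using this
      exact ⟨⟨δ, hδ0, le_refl δ, hPdiff⟩, hPU, hPz, rfl⟩
    | succ j ih =>
      obtain ⟨⟨ρ, hρ0, hρδ, hdiffSj⟩, hPUj, ⟨hzr, hzl⟩, hTj⟩ := ih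
      have hScontj : ContinuousAt (S j) 0 :=
        (hdiffSj.differentiableAt (isOpen_ball.mem_nhds (mem_ball_self hρ0))).continuousAt
      -- (b) at j+1
      have hPU1 : ∀ lam : ℂ, lam ≠ 0 → ‖lam‖ < δ →
          S (j + 1) lam * (z - lam • 1) = tf (j + 1) ∧
          (z - lam • 1) * S (j + 1) lam = tf (j + 1) := by
        intro lam h0 hd
        rw [hSsucc j lam h0, htfsucc j]
        constructor
        · rw [smul_mul_assoc, sub_mul, (hPUj lam h0 hd).1]
          have h1 : s j * (z - lam • 1) = tf j - lam • s j := by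
            rw [mul_sub, mul_smul_comm, mul_one, hzr]
          rw [h1, sub_sub_cancel, smul_smul, inv_mul_cancel₀ h0, one_smul]
        · rw [mul_smul_comm, mul_sub, (hPUj lam h0 hd).2]
          have h1 : (z - lam • 1) * s j = tf j - lam • s j := by
            rw [sub_mul, smul_mul_assoc, one_mul, hzl]
          rw [h1, sub_sub_cancel, smul_smul, inv_mul_cancel₀ h0, one_smul]
      -- (a) at j+1
      have hdAt : DifferentiableAt ℂ (S j) 0 :=
        hdiffSj.differentiableAt (isOpen_ball.mem_nhds (mem_ball_self hρ0))
      obtain ⟨c, hc⟩ := hdAt.isBigO_sub.bound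
      rw [Metric.eventually_nhds_iff] at hc
      obtain ⟨ε, hε0, hcb⟩ := hc
      set ρ' : ℝ := min ρ (min ε δ) with hρ'
      have hρ'0 : 0 < ρ' := lt_min hρ0 (lt_min hε0 hδ0)
      have hρ'δ : ρ' ≤ δ := le_trans (min_le_right _ _) (min_le_right _ _)
      have hgdiff : DifferentiableOn ℂ (fun t => t⁻¹ • (S j t - S j 0))
          (ball 0 ρ' \ {0}) := by
        rintro t ⟨htb, htn⟩
        have ht0 : t ≠ 0 := htn
        have htρ : t ∈ ball (0 : ℂ) ρ :=
          mem_of_mem_of_subset htb (ball_subset_ball (min_le_left _ _))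
        apply DifferentiableAt.differentiableWithinAt
        exact (differentiableAt_inv ht0).smul
          ((hdiffSj.differentiableAt (isOpen_ball.mem_nhds htρ)).sub_const (S j 0))
      have hgbdd : BddAbove
          (norm ∘ (fun t => t⁻¹ • (S j t - S j 0)) '' (ball 0 ρ' \ {0})) := by
        refine ⟨|c|, ?_⟩
        rintro - ⟨t, ⟨htb, htn⟩, rfl⟩
        have ht0 : t ≠ 0 := htn
        have htpos : 0 < ‖t‖ := norm_pos_iff.mpr ht0
        have htε : dist t 0 < ε := by
          rw [mem_ball] at htb
          exact lt_of_lt_of_le htb (le_trans (min_le_right _ _) (min_le_left _ _))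
        have hb := hcb htε
        simp only [sub_zero] at hb
        have hb' : ‖S j t - S j 0‖ ≤ |c| * ‖t‖ := by
          refine le_trans hb ?_
          apply mul_le_mul_of_nonneg_right (le_abs_self c) (norm_nonneg t)
        simp only [Function.comp_apply]
        rw [norm_smul, norm_inv]
        calc ‖t‖⁻¹ * ‖S j t - S j 0‖ ≤ ‖t‖⁻¹ * (|c| * ‖t‖) := by
              apply mul_le_mul_of_nonneg_left hb' (by positivity)
          _ = |c| := by
              rw [mul_comm (|c|) ‖t‖, ← mul_assoc, inv_mul_cancel₀ (ne_of_gt htpos), one_mul]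
      have hPdiff1 : DifferentiableOn ℂ (S (j + 1)) (ball 0 ρ') := by
        rw [hSsuccdef j]
        exact Complex.differentiableOn_update_limUnder_of_bddAbove
          (ball_mem_nhds 0 hρ'0) hgdiff hgbdd
      have hScont1 : ContinuousAt (S (j + 1)) 0 :=
        (hPdiff1.differentiableAt (isOpen_ball.mem_nhds (mem_ball_self hρ'0))).continuousAt
      -- (c) at j+1
      have hPz1 : s (j + 1) * z = tf (j + 1) ∧ z * s (j + 1) = tf (j + 1) := by
        constructor
        · have := hev (fun t => S (j + 1) t * (z - t • 1)) (tf (j + 1))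
            (fun lam h0 hd => (hPU1 lam h0 hd).1) (hScont1.mul hUcont.continuousAt)
          simpa using this
        · have := hev (fun t => (z - t • 1) * S (j + 1) t) (tf (j + 1))
            (fun lam h0 hd => (hPU1 lam h0 hd).2) (hUcont.continuousAt.mul hScont1)
          simpa using this
      -- (d) at j+1
      have hP2 : ∀ lam : ℂ, lam ≠ 0 → ‖lam‖ < δ →
          S j lam * s 0 = z ^ M * S (j + 1) lam := by
        intro lam h0 hd
        have hw : (z - lam • 1) * (S j lam * s 0 - z ^ M * S (j + 1) lam) = 0 := by
          rw [mul_sub, ← mul_assoc, (hPUj lam h0 hd).2, ← mul_assoc, hUzp lam M,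
            mul_assoc, (hPU1 lam h0 hd).2, htfsucc j, hTj]
          exact sub_self _
        have := congrArg (fun w => Ring.inverse (z - lam • 1) * w) hw
        simpa [← mul_assoc, (hRf lam h0 hd).2.1, sub_eq_zero] using this
      have hT1 : tf (j + 1) * s 0 = z ^ M * s (j + 1) := by
        rw [htfsucc j]
        have hzero : ∀ lam : ℂ, lam ≠ 0 → ‖lam‖ < δ →
            S j lam * s 0 - z ^ M * S (j + 1) lam = 0 := by
          intro lam h0 hd
          rw [hP2 lam h0 hd]
          exact sub_self _
        have := hev (fun t => S j t * s 0 - z ^ M * S (j + 1) t) 0 hzero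
          ((hScontj.mul continuousAt_const).sub (continuousAt_const.mul hScont1))
        rw [sub_eq_zero] at this
        exact this
      exact ⟨⟨ρ', hρ'0, hρ'δ, hPdiff1⟩, hPU1, hPz1, hT1⟩
  -- harvest and conclude
  apply final_algebra z m' s
  · exact (main 0).2.2.1.1
  · exact (main 0).2.2.1.2
  · intro j; exact (main (j + 1)).2.2.1.1
  · intro j; exact (main (j + 1)).2.2.1.2
  · intro j
    have := (main (j + 1)).2.2.2
    rw [htfsucc j] at this
    exact this

end Main

theorem stmt_3 {A : Type*} [NormedRing A] [NormedAlgebra ℂ A] [CompleteSpace A]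
    (x₁ x₂ : A) (α : ℂ) (h12 : x₁ * x₂ = α • (x₁ + x₂))
    (h1 : DrazinInvertible x₁) (h2 : DrazinInvertible x₂) :
    DrazinInvertible (x₁ + x₂) := by
  obtain ⟨d₁, hc₁, hb₁, n₁, hn₁⟩ := h1
  obtain ⟨d₂, hc₂, hb₂, n₂, hn₂⟩ := h2
  have hn₁' : (x₁ * (1 - x₁ * d₁)) ^ (n₁ + 1) = 0 := by rw [pow_succ, hn₁, zero_mul]
  have hn₂' : (x₂ * (1 - x₂ * d₂)) ^ (n₂ + 1) = 0 := by rw [pow_succ, hn₂, zero_mul]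
  obtain ⟨δ, hδ0, hδ1, C, hres⟩ :=
    sum_resolvent x₁ x₂ α h12 d₁ n₁ hc₁ hb₁ hn₁' d₂ n₂ hc₂ hb₂ hn₂'
  apply abstract_core (x₁ + x₂) (n₂ + n₁ + 1) δ C hδ0 hδ1
  intro lam h0 hd
  obtain ⟨R, hR1, hR2, hR3⟩ := hres lam h0 hd
  refine ⟨R, hR1, hR2, ?_⟩
  have hexp : (n₂ + 1) + (n₁ + 1) = (n₂ + n₁ + 1) + 1 := by omega
  rw [← hexp]
  exact hR3
end

section
/- Let x₁, x₂ be elements of a complex unital Banach algebra A and α ∈ ℂ with α ≠ 0 such that x₁x₂ = α(x₁ + x₂). If x₁ is g-Drazin invertible and x₁ + x₂ is g-Drazin invertible, then x₂ is g-Drazin invertible with x₂^D = (1/α)·(x₁+x₂)^D·x₁. -/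
/-!
Let `π = x₁ b₁` be the spectral idempotent of `x₁`. Multiplying `x₁ x₂ = α (x₁ + x₂)` by
`1 - π` and inverting `α - x₁ (1 - π)` shows that `(1 - π) x₂` is a commuting multiple of the
quasinilpotent `x₁ (1 - π)`; hence `(1 - π) (x₁ + x₂)` is quasinilpotent and `1 - π` kills the
spectral idempotent of `x₁ + x₂`. On the other side `(x₁ - α) (x₁ + x₂) = x₁²` makes `b₁² (x₁ - α)`
a left inverse of `x₁ + x₂` on `π`. So both spectral idempotents equal `π`, and then
`(x₁ + x₂)^D = b₁² (x₁ - α)` commutes with `x₁`, from which the formula for `x₂^D` is a direct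
computation.
-/

/-- `b` is a generalized Drazin inverse of `a`: `a` commutes with `b`, `b` is inner-inverse
to itself relative to `a`, and `a * (1 - a * b)` is quasinilpotent (spectral radius zero). -/
def IsGDrazinInverse {A : Type*} [NormedRing A] [NormedAlgebra ℂ A] (a b : A) : Prop :=
  a * b = b * a ∧ b * a * b = b ∧ spectralRadius ℂ (a * (1 - a * b)) = 0

/-- `a` is generalized Drazin invertible. -/
def GDrazinInvertible {A : Type*} [NormedRing A] [NormedAlgebra ℂ A] (a : A) : Prop :=
  ∃ b : A, IsGDrazinInverse a b

open Filter Topology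

section Quasinilpotent

variable {A : Type*} [NormedRing A] [NormedAlgebra ℂ A]

theorem isUnit_smul_one_sub_of_spectralRadius_eq_zero {q : A} (hq : spectralRadius ℂ q = 0)
    {μ : ℂ} (hμ : μ ≠ 0) : IsUnit (μ • (1 : A) - q) := by
  have hμq : μ ∈ resolventSet ℂ q :=
    spectrum.mem_resolventSet_of_spectralRadius_lt (by simpa [hq] using hμ)
  rwa [spectrum.mem_resolventSet_iff, Algebra.algebraMap_eq_smul_one] at hμq

variable [CompleteSpace A]

theorem spectralRadius_eq_zero_iff_tendsto (a : A) :
    spectralRadius ℂ a = 0 ↔ Tendsto (fun n : ℕ => ‖a ^ n‖ ^ (1 / n : ℝ)) atTop (𝓝 0) := by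
  have gelfand := spectrum.pow_norm_pow_one_div_tendsto_nhds_spectralRadius a
  constructor
  · intro ha
    rw [ha] at gelfand
    refine ((ENNReal.tendsto_toReal ENNReal.zero_ne_top).comp gelfand).congr fun n => ?_
    exact ENNReal.toReal_ofReal (by positivity)
  · intro h
    refine tendsto_nhds_unique gelfand ?_
    simpa [Function.comp_def] using (ENNReal.continuous_ofReal.tendsto 0).comp h

theorem Commute.spectralRadius_mul_eq_zero {x q : A} (hxq : Commute x q)
    (hq : spectralRadius ℂ q = 0) : spectralRadius ℂ (x * q) = 0 := by
  rw [spectralRadius_eq_zero_iff_tendsto] at hq ⊢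
  have hbound : ∀ᶠ n : ℕ in atTop,
      ‖(x * q) ^ n‖ ^ (1 / n : ℝ) ≤ ‖x‖ * ‖q ^ n‖ ^ (1 / n : ℝ) := by
    filter_upwards [eventually_ne_atTop 0] with n hn
    calc ‖(x * q) ^ n‖ ^ (1 / n : ℝ) ≤ (‖x‖ ^ n * ‖q ^ n‖) ^ (1 / n : ℝ) := by
          gcongr
          rw [hxq.mul_pow]
          exact (norm_mul_le _ _).trans
            (mul_le_mul_of_nonneg_right (norm_pow_le' x (Nat.pos_of_ne_zero hn)) (by positivity))
      _ = ‖x‖ * ‖q ^ n‖ ^ (1 / n : ℝ) := by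
          rw [Real.mul_rpow (by positivity) (by positivity), one_div,
            Real.pow_rpow_inv_natCast (norm_nonneg x) hn]
  exact squeeze_zero' (.of_forall fun n => by positivity) hbound (by simpa using hq.const_mul ‖x‖)

theorem tendsto_norm_pow_mul_pow_of_spectralRadius_eq_zero {g : A}
    (hg : spectralRadius ℂ g = 0) (C : ℝ) :
    Tendsto (fun n : ℕ => ‖g ^ n‖ * C ^ n) atTop (𝓝 0) := by
  have hroot : Tendsto (fun n : ℕ => ‖g ^ n‖ ^ (1 / n : ℝ) * C) atTop (𝓝 0) := by
    simpa using ((spectralRadius_eq_zero_iff_tendsto g).mp hg).mul_const C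
  have hsmall : ∀ᶠ n : ℕ in atTop, ‖‖g ^ n‖ * C ^ n‖ ≤ (1 / 2 : ℝ) ^ n := by
    filter_upwards [eventually_ne_atTop 0,
      hroot.norm.eventually (ge_mem_nhds (by norm_num : ‖(0 : ℝ)‖ < 1 / 2))] with n hn hsmall
    calc ‖‖g ^ n‖ * C ^ n‖ = ‖‖g ^ n‖ ^ (1 / n : ℝ) * C‖ ^ n := by
          rw [← norm_pow, mul_pow, one_div, Real.rpow_inv_natCast_pow (norm_nonneg _) hn]
      _ ≤ (1 / 2 : ℝ) ^ n := by gcongr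
  exact squeeze_zero_norm' hsmall
    (tendsto_pow_atTop_nhds_zero_of_lt_one (by norm_num) (by norm_num))

theorem eq_zero_of_eventually_norm_le_mul_norm_pow {z g : A} (hg : spectralRadius ℂ g = 0)
    (C D : ℝ) (h : ∀ᶠ n : ℕ in atTop, ‖z‖ ≤ D * (‖g ^ n‖ * C ^ n)) : z = 0 := by
  have hlim := (tendsto_norm_pow_mul_pow_of_spectralRadius_eq_zero hg C).const_mul D
  rw [mul_zero] at hlim
  exact norm_le_zero_iff.mp (ge_of_tendsto hlim h)

end Quasinilpotent

namespace IsGDrazinInverse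

variable {A : Type*} [NormedRing A] [NormedAlgebra ℂ A] {a s : A}

theorem commute (h : IsGDrazinInverse a s) : Commute a s := h.1

theorem mul_mul_self (h : IsGDrazinInverse a s) : s * (a * s) = s := by
  rw [← mul_assoc, h.2.1]

theorem isIdempotentElem_mul (h : IsGDrazinInverse a s) : IsIdempotentElem (a * s) := by
  rw [IsIdempotentElem, mul_assoc, h.mul_mul_self]

theorem commute_mul (h : IsGDrazinInverse a s) : Commute a (a * s) :=
  (Commute.refl a).mul_right h.commute

theorem mul_self_mul_mul_self (h : IsGDrazinInverse a s) : s * s * (a * a) = a * s := by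
  rw [mul_assoc, ← mul_assoc s a, ← h.commute.eq, ← mul_assoc, ← mul_assoc, h.2.1, h.commute.eq]

theorem mul_self_mul_sub_smul_one_mul_mul (h : IsGDrazinInverse a s) (μ : ℂ) :
    s * s * (a - μ • 1) * (a * s) = s * s * (a - μ • 1) := by
  have hcomm : Commute (a - μ • 1) (a * s) :=
    h.commute_mul.sub_left ((Commute.one_left _).smul_left μ)
  rw [mul_assoc, hcomm.eq, ← mul_assoc, mul_assoc s s, h.mul_mul_self]

theorem pow_mul_pow (h : IsGDrazinInverse a s) {n : ℕ} (hn : n ≠ 0) : a ^ n * s ^ n = a * s := by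
  rw [← h.commute.mul_pow, h.isIdempotentElem_mul.pow_eq hn]

variable [CompleteSpace A]

theorem mul_mul_eq_zero (h : IsGDrazinInverse a s) {f g : A} (hg : spectralRadius ℂ g = 0)
    (hfa : f * a = g * f) : f * (a * s) = 0 := by
  refine eq_zero_of_eventually_norm_le_mul_norm_pow hg ‖s‖ ‖f‖ ?_
  filter_upwards [eventually_ne_atTop 0] with n hn
  have hfan : f * a ^ n = g ^ n * f := SemiconjBy.pow_right hfa n
  calc ‖f * (a * s)‖ = ‖g ^ n * (f * s ^ n)‖ := by
        rw [← h.pow_mul_pow hn, ← mul_assoc, hfan, mul_assoc]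
    _ ≤ ‖g ^ n‖ * (‖f‖ * ‖s‖ ^ n) := by
        refine (norm_mul_le _ _).trans (mul_le_mul_of_nonneg_left ?_ (norm_nonneg _))
        exact (norm_mul_le _ _).trans
          (mul_le_mul_of_nonneg_left (norm_pow_le' s (Nat.pos_of_ne_zero hn)) (norm_nonneg _))
    _ = ‖f‖ * (‖g ^ n‖ * ‖s‖ ^ n) := by ring

theorem mul_mul_eq_self (h : IsGDrazinInverse a s) {e L : A} (hLa : L * a = e) (hLe : L * e = L) :
    e * (a * s) = e := by
  set r := 1 - a * s
  have hr : IsIdempotentElem r := h.isIdempotentElem_mul.one_sub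
  have har : Commute a r := (Commute.one_right a).sub_right h.commute_mul
  have hLan : ∀ n : ℕ, L ^ (n + 1) * a ^ (n + 1) = e := by
    intro n
    induction n with
    | zero => simpa using hLa
    | succ n ih =>
      rw [pow_succ L (n + 1), pow_succ' a (n + 1), mul_assoc, ← mul_assoc L, hLa, pow_succ L n,
        mul_assoc, ← mul_assoc L e, hLe, ← mul_assoc, ← pow_succ, ih]
  have her : e * r = 0 := by
    refine eq_zero_of_eventually_norm_le_mul_norm_pow h.2.2 ‖L‖ 1 ?_
    filter_upwards [eventually_ge_atTop 1] with n hn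
    obtain ⟨k, rfl⟩ := Nat.exists_eq_add_of_le' hn
    calc ‖e * r‖ = ‖L ^ (k + 1) * (a * r) ^ (k + 1)‖ := by
          rw [har.mul_pow, hr.pow_succ_eq, ← mul_assoc, hLan]
      _ ≤ ‖L‖ ^ (k + 1) * ‖(a * r) ^ (k + 1)‖ :=
          (norm_mul_le _ _).trans
            (mul_le_mul_of_nonneg_right (norm_pow_le' L k.succ_pos) (norm_nonneg _))
      _ = 1 * (‖(a * r) ^ (k + 1)‖ * ‖L‖ ^ (k + 1)) := by ring
  rwa [mul_sub, mul_one, sub_eq_zero, eq_comm] at her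

end IsGDrazinInverse

theorem sub_smul_one_mul_add_eq_mul_self {𝕜 R : Type*} [CommSemiring 𝕜] [Ring R] [Algebra 𝕜 R]
    {x₁ x₂ : R} {α : 𝕜} (h12 : x₁ * x₂ = α • (x₁ + x₂)) :
    (x₁ - α • 1) * (x₁ + x₂) = x₁ * x₁ := by
  rw [sub_mul, mul_add x₁, h12, smul_mul_assoc, one_mul]
  abel

section

variable {A : Type*} [NormedRing A] [NormedAlgebra ℂ A] {x₁ x₂ b₁ s : A} {α : ℂ}

theorem IsGDrazinInverse.mul_self_mul_sub_smul_one_mul_add (h1 : IsGDrazinInverse x₁ b₁)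
    (h12 : x₁ * x₂ = α • (x₁ + x₂)) : b₁ * b₁ * (x₁ - α • 1) * (x₁ + x₂) = x₁ * b₁ := by
  rw [mul_assoc _ (x₁ - α • 1), sub_smul_one_mul_add_eq_mul_self h12, h1.mul_self_mul_mul_self]

theorem exists_commute_one_sub_mul_mul_eq (hα : α ≠ 0) (h12 : x₁ * x₂ = α • (x₁ + x₂))
    (h1 : IsGDrazinInverse x₁ b₁) :
    ∃ c : A, Commute c (x₁ * (1 - x₁ * b₁)) ∧
      (1 - x₁ * b₁) * x₂ = c * (x₁ * (1 - x₁ * b₁)) := by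
  set f := 1 - x₁ * b₁
  set q := x₁ * f
  have hfx₁ : f * x₁ = q := ((Commute.one_right x₁).sub_right h1.commute_mul).eq.symm
  have hqf : q * f = q := by rw [mul_assoc, h1.isIdempotentElem_mul.one_sub.eq]
  set u := (isUnit_smul_one_sub_of_spectralRadius_eq_zero h1.2.2 hα).unit
  have hu : Commute (u : A) q := ((Commute.one_left q).smul_left α).sub_left (Commute.refl q)
  have hufx₂ : (u : A) * (f * x₂) = (-α) • q := by
    have hqx₂ : q * (f * x₂) = α • q + α • (f * x₂) := by
      rw [← mul_assoc, hqf, ← hfx₁, mul_assoc, h12, mul_smul_comm, mul_add, hfx₁, smul_add]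
    rw [IsUnit.unit_spec, sub_mul, hqx₂, smul_mul_assoc, one_mul, neg_smul]
    abel
  refine ⟨(-α) • (↑u⁻¹ : A), (hu.units_inv_left).smul_left _, ?_⟩
  rw [smul_mul_assoc, ← mul_smul_comm, ← hufx₂, Units.inv_mul_cancel_left]

variable [CompleteSpace A]

theorem add_mul_eq_mul_of_mul_eq_smul_add (hα : α ≠ 0) (h12 : x₁ * x₂ = α • (x₁ + x₂))
    (h1 : IsGDrazinInverse x₁ b₁) (hs : IsGDrazinInverse (x₁ + x₂) s) :
    (x₁ + x₂) * s = x₁ * b₁ := by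
  obtain ⟨c, hc, hfx₂⟩ := exists_commute_one_sub_mul_mul_eq hα h12 h1
  set π := x₁ * b₁
  set y := x₁ + x₂
  have hfy : (1 - π) * y = (1 + c) * (x₁ * (1 - π)) := by
    rw [mul_add, hfx₂, ((Commute.one_right x₁).sub_right h1.commute_mul).eq, add_mul, one_mul]
  have hfyf : (1 - π) * y = (1 - π) * y * (1 - π) := by
    rw [hfy, mul_assoc, mul_assoc, h1.isIdempotentElem_mul.one_sub.eq]
  have hcomplement : (1 - π) * (y * s) = 0 :=
    hs.mul_mul_eq_zero (hfy ▸ ((Commute.one_left _).add_left hc).spectralRadius_mul_eq_zero h1.2.2)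
      hfyf
  have hrange : π * (y * s) = π :=
    hs.mul_mul_eq_self (h1.mul_self_mul_sub_smul_one_mul_add h12)
      (h1.mul_self_mul_sub_smul_one_mul_mul α)
  rw [← one_mul (y * s), ← sub_add_cancel 1 π, add_mul, hcomplement, hrange, zero_add]

theorem eq_mul_self_mul_sub_smul_one (hα : α ≠ 0) (h12 : x₁ * x₂ = α • (x₁ + x₂))
    (h1 : IsGDrazinInverse x₁ b₁) (hs : IsGDrazinInverse (x₁ + x₂) s) :
    s = b₁ * b₁ * (x₁ - α • 1) := by
  have hys := add_mul_eq_mul_of_mul_eq_smul_add hα h12 h1 hs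
  calc s = (x₁ + x₂) * s * s := by rw [hs.commute.eq, hs.2.1]
    _ = b₁ * b₁ * (x₁ - α • 1) * (x₁ + x₂) * s := by
        rw [hys, h1.mul_self_mul_sub_smul_one_mul_add h12]
    _ = b₁ * b₁ * (x₁ - α • 1) := by
        rw [mul_assoc, hys, h1.mul_self_mul_sub_smul_one_mul_mul]

theorem mul_mul_eq_smul_of_mul_eq_smul_add (hα : α ≠ 0) (h12 : x₁ * x₂ = α • (x₁ + x₂))
    (h1 : IsGDrazinInverse x₁ b₁) (hs : IsGDrazinInverse (x₁ + x₂) s) :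
    x₂ * s * x₁ = α • (x₁ * b₁) := by
  have hys := add_mul_eq_mul_of_mul_eq_smul_add hα h12 h1 hs
  have hsx₁ : Commute s x₁ := by
    rw [eq_mul_self_mul_sub_smul_one hα h12 h1 hs]
    have hb₁ : Commute b₁ x₁ := h1.commute.symm
    exact (hb₁.mul_left hb₁).mul_left
      ((Commute.refl x₁).sub_left ((Commute.one_left x₁).smul_left α))
  have hx₁x₁s : x₁ * x₁ * s = x₁ * (x₁ * b₁) - α • (x₁ * b₁) := by
    rw [← sub_smul_one_mul_add_eq_mul_self h12, mul_assoc, hys, sub_mul, smul_mul_assoc, one_mul]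
  calc x₂ * s * x₁ = (x₁ + x₂) * s * x₁ - x₁ * x₁ * s := by
        rw [add_mul, add_mul, mul_assoc x₁ s, hsx₁.eq, ← mul_assoc]; abel
    _ = α • (x₁ * b₁) := by
        rw [hys, hx₁x₁s, mul_assoc, ← h1.commute.eq, ← mul_assoc]; abel

end

theorem stmt_5 {A : Type*} [NormedRing A] [NormedAlgebra ℂ A] [CompleteSpace A]
    (x₁ x₂ b₁ s : A) (α : ℂ) (hα : α ≠ 0) (h12 : x₁ * x₂ = α • (x₁ + x₂))
    (h1 : IsGDrazinInverse x₁ b₁) (hs : IsGDrazinInverse (x₁ + x₂) s) :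
    IsGDrazinInverse x₂ (α⁻¹ • (s * x₁)) := by
  have hys := add_mul_eq_mul_of_mul_eq_smul_add hα h12 h1 hs
  have hwx₂ : α⁻¹ • (s * x₁) * x₂ = x₁ * b₁ := by
    rw [smul_mul_assoc, mul_assoc, h12, mul_smul_comm, smul_smul, inv_mul_cancel₀ hα, one_smul,
      ← hs.commute.eq, hys]
  have hx₂w : x₂ * (α⁻¹ • (s * x₁)) = x₁ * b₁ := by
    rw [mul_smul_comm, ← mul_assoc, mul_mul_eq_smul_of_mul_eq_smul_add hα h12 h1 hs, smul_smul,
      inv_mul_cancel₀ hα, one_smul]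
  have hx₂π : Commute x₂ (x₁ * b₁) := by
    calc x₂ * (x₁ * b₁) = x₂ * (α⁻¹ • (s * x₁) * x₂) := by rw [hwx₂]
      _ = x₁ * b₁ * x₂ := by rw [← mul_assoc, hx₂w]
  obtain ⟨c, hc, hfx₂⟩ := exists_commute_one_sub_mul_mul_eq hα h12 h1
  refine ⟨hx₂w.trans hwx₂.symm, ?_, ?_⟩
  · rw [hwx₂, mul_smul_comm, ← mul_assoc, ← hys, hs.commute.eq, hs.2.1]
  · rw [hx₂w, ((Commute.one_right x₂).sub_right hx₂π).eq, hfx₂]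
    exact hc.spectralRadius_mul_eq_zero h1.2.2
end

section
/- Let x₁, x₂, x₃ be elements of a complex unital Banach algebra A satisfying x₁x₂ + x₁x₃ + x₂x₃ = α₁·1 + α₂(x₁ + x₂ + x₃) and x₁x₂x₃ = β(x₁ + x₂ + x₃), where α₁, α₂, β ∈ ℂ and β ≠ 0. If x₁, x₂, x₃ are all generalized Drazin invertible, then x₁ + x₂ + x₃ is generalized Drazin invertible. -/
open Metric Complex Filter Topology Set Real

section Algebraic

variable {R : Type*} [Ring R]

lemma isUnit_sub_of_isGDrazinInverse {a b m : R} (hab : a * b = b * a) (hbab : b * a * b = b)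
    (hma : Commute m a) (hmb : Commute m b) (h₁ : IsUnit (m - a * (1 - a * b)))
    (h₂ : IsUnit (1 - m * b)) : IsUnit (m - a) := by
  obtain ⟨v, hv⟩ := h₁
  obtain ⟨u, hu⟩ := h₂
  set p := 1 - a * b with hp_def
  have hab' : Commute a b := hab
  have habb : a * b * b = b := by rw [hab, hbab]
  have hpp : p * p = p := by
    simp only [hp_def, sub_mul, mul_sub, one_mul, mul_one, mul_assoc, ← mul_assoc b a b, hbab]
    abel
  have hap : Commute a p := (Commute.one_right a).sub_right ((Commute.refl a).mul_right hab')
  have hmp : Commute m p := (Commute.one_right m).sub_right (hma.mul_right hmb)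
  have hx : ∀ y, Commute m y → Commute a y → Commute (m - a) y := fun y h h' => h.sub_left h'
  have hxv : Commute (m - a) v := hv ▸ hx _ ((Commute.refl m).sub_right (hma.mul_right hmp))
    (hma.symm.sub_right ((Commute.refl a).mul_right hap))
  have hxu : Commute (m - a) u := hu ▸ hx _ ((Commute.one_right m).sub_right
    ((Commute.refl m).mul_right hmb)) ((Commute.one_right a).sub_right (hma.symm.mul_right hab'))
  have hxp : Commute (m - a) p := hx p hmp hap
  have hxb : Commute (m - a) b := hx b hmb hab'
  set w : R := ↑v⁻¹ * p - b * ↑u⁻¹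
  have hpart₁ : (m - a) * (↑v⁻¹ * p) = p := by
    have : (m - a) * p = v * p := by
      rw [hv]; simp only [sub_mul, mul_assoc, hpp]
    rw [← mul_assoc, hxv.units_inv_right.eq, mul_assoc, this, ← mul_assoc, Units.inv_mul, one_mul]
  have hpart₂ : (m - a) * (b * ↑u⁻¹) = -(a * b) := by
    have habmb : a * b * (m * b) = m * b := by
      rw [← mul_assoc, ← (hma.mul_right hmb).eq, mul_assoc, habb]
    have : (m - a) * b = -(a * b * u) := by
      rw [hu, mul_sub, mul_one, habmb, sub_mul]; abel
    rw [← mul_assoc, this, neg_mul, mul_assoc, Units.mul_inv, mul_one]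
  have hw : (m - a) * w = 1 := by
    rw [mul_sub, hpart₁, hpart₂, hp_def]; abel
  have hcomm : Commute (m - a) w :=
    (hxv.units_inv_right.mul_right hxp).sub_right (hxb.mul_right hxu.units_inv_right)
  exact ((hcomm.isUnit_mul_iff).mp (hw ▸ isUnit_one)).1

lemma isUnit_algebraMap_sub_mul_of_isIdempotentElem {𝕜 : Type*} [Field 𝕜] [Algebra 𝕜 R]
    {s p c : R} {μ : 𝕜} (hμ : μ ≠ 0)
    (hp : IsIdempotentElem p) (hsp : Commute s p) (hcs : Commute c s) (hcp : Commute c p)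
    (hc : (algebraMap 𝕜 R μ - s) * c = p) : IsUnit (algebraMap 𝕜 R μ - s * p) := by
  set d := c * p + μ⁻¹ • (1 - p)
  have hpc : (algebraMap 𝕜 R μ - s * p) * (c * p) = p := by
    have hpcp : p * (c * p) = c * p := by rw [← mul_assoc, ← hcp.eq, mul_assoc, hp.eq]
    rw [sub_mul, mul_assoc s, hpcp, ← mul_assoc, ← mul_assoc, ← sub_mul, ← sub_mul, hc, hp.eq]
  have hp' : (algebraMap 𝕜 R μ - s * p) * (μ⁻¹ • (1 - p)) = 1 - p := by
    have h₀ : s * p * (1 - p) = 0 := by rw [mul_assoc, mul_sub, mul_one, hp.eq, sub_self, mul_zero]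
    rw [mul_smul_comm, sub_mul, h₀, sub_zero, Algebra.algebraMap_eq_smul_one, smul_mul_assoc,
      one_mul, smul_smul, inv_mul_cancel₀ hμ, one_smul]
  have hd : (algebraMap 𝕜 R μ - s * p) * d = 1 := by
    rw [mul_add, hpc, hp', add_sub_cancel]
  have hcomm : Commute (algebraMap 𝕜 R μ - s * p) d :=
    (Algebra.commute_algebraMap_left μ d).sub_left <|
      ((hcs.symm.mul_right hsp).mul_left (hcp.symm.mul_right (Commute.refl p))).add_right
        (((Commute.one_right _).sub_right (hsp.mul_left (Commute.refl p))).smul_right _)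
  exact (hcomm.isUnit_mul_iff.mp (hd ▸ isUnit_one)).1

end Algebraic

lemma spectralRadius_eq_zero_iff {𝕜 A : Type*} [NormedField 𝕜] [Ring A] [Algebra 𝕜 A] {a : A} :
    spectralRadius 𝕜 a = 0 ↔ ∀ μ : 𝕜, μ ≠ 0 → μ ∈ resolventSet 𝕜 a := by
  simp only [spectralRadius, ENNReal.iSup_eq_zero, ENNReal.coe_eq_zero, nnnorm_eq_zero]
  exact forall_congr' fun μ => not_imp_comm

section Resolvent

variable {𝕜 A : Type*} [CommRing 𝕜] [Ring A] [Algebra 𝕜 A]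

lemma Commute.resolvent_right {x a : A} (h : Commute x a) (r : 𝕜) :
    Commute x (resolvent a r) := by
  by_cases hr : r ∈ resolventSet 𝕜 a
  · rw [spectrum.resolvent_eq hr]
    have hx := (Algebra.commute_algebraMap_right r x).sub_right h
    rw [← hr.unit_spec] at hx
    exact hx.units_inv_right
  · rw [resolvent, Ring.inverse_non_unit _ hr]
    exact Commute.zero_right x

lemma algebraMap_sub_mul_resolvent {a : A} {r : 𝕜} (hr : r ∈ resolventSet 𝕜 a) (μ : 𝕜) :
    (algebraMap 𝕜 A μ - a) * resolvent a r = (μ - r) • resolvent a r + 1 := by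
  have : algebraMap 𝕜 A μ - a = algebraMap 𝕜 A (μ - r) + (algebraMap 𝕜 A r - a) := by
    rw [map_sub]; abel
  rw [this, add_mul, ← Algebra.smul_def, resolvent, Ring.mul_inverse_cancel _ hr]

lemma resolvent_sub_resolvent_eq_smul_mul {a : A} {r r' : 𝕜} (hr : r ∈ resolventSet 𝕜 a)
    (hr' : r' ∈ resolventSet 𝕜 a) :
    resolvent a r - resolvent a r' = (r' - r) • (resolvent a r * resolvent a r') := by
  have e : algebraMap 𝕜 A (r' - r) = (algebraMap 𝕜 A r' - a) - (algebraMap 𝕜 A r - a) := by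
    rw [map_sub]; abel
  calc resolvent a r - resolvent a r'
      = resolvent a r * (algebraMap 𝕜 A r' - a) * resolvent a r'
        - resolvent a r * (algebraMap 𝕜 A r - a) * resolvent a r' := by
        rw [mul_assoc, resolvent, resolvent, Ring.mul_inverse_cancel _ hr', mul_one,
          Ring.inverse_mul_cancel _ hr, one_mul]
    _ = resolvent a r * algebraMap 𝕜 A (r' - r) * resolvent a r' := by
        rw [e, mul_sub _ (_ - a), sub_mul]
    _ = (r' - r) • (resolvent a r * resolvent a r') := by
        rw [← Algebra.commutes, Algebra.smul_def, mul_assoc]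

end Resolvent

section CircleIntegral

lemma circleIntegral_comm {E : Type*} [NormedAddCommGroup E] [NormedSpace ℂ E]
    {F : ℂ → ℂ → E} {c₁ c₂ : ℂ} {r₁ r₂ : ℝ}
    (hF : Continuous fun q : ℝ × ℝ => F (circleMap c₁ r₁ q.1) (circleMap c₂ r₂ q.2)) :
    (∮ z in C(c₁, r₁), ∮ w in C(c₂, r₂), F z w) = ∮ w in C(c₂, r₂), ∮ z in C(c₁, r₁), F z w := by
  set G : ℝ → ℝ → E := fun θ φ => deriv (circleMap c₁ r₁) θ •
    deriv (circleMap c₂ r₂) φ • F (circleMap c₁ r₁ θ) (circleMap c₂ r₂ φ)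
  have hG : Continuous fun q : ℝ × ℝ => G q.1 q.2 := by
    simp only [G, deriv_circleMap]
    exact (((continuous_circleMap _ _).comp continuous_fst).mul continuous_const).smul
      ((((continuous_circleMap _ _).comp continuous_snd).mul continuous_const).smul hF)
  have hswap : (∫ θ in (0)..2 * π, ∫ φ in (0)..2 * π, G θ φ)
      = ∫ φ in (0)..2 * π, ∫ θ in (0)..2 * π, G θ φ := by
    simp only [intervalIntegral.integral_of_le Real.two_pi_pos.le]
    refine MeasureTheory.integral_integral_swap ?_
    rw [MeasureTheory.Measure.prod_restrict]
    exact (hG.continuousOn.integrableOn_compact (isCompact_Icc.prod isCompact_Icc)).mono_set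
      (prod_mono Ioc_subset_Icc_self Ioc_subset_Icc_self)
  simp only [circleIntegral, ← intervalIntegral.integral_smul]
  simpa only [G, smul_comm (deriv (circleMap c₁ r₁) _)] using hswap

variable {A : Type*} [NormedRing A] [NormedAlgebra ℂ A] [CompleteSpace A]

lemma mul_circleIntegral {f : ℂ → A} {c : ℂ} {R : ℝ} (hf : CircleIntegrable f c R) (a : A) :
    a * (∮ z in C(c, R), f z) = ∮ z in C(c, R), a * f z := by
  simpa [circleIntegral] using
    ((ContinuousLinearMap.mul ℂ A a).intervalIntegral_comp_comm hf.out).symm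

lemma circleIntegral_mul {f : ℂ → A} {c : ℂ} {R : ℝ} (hf : CircleIntegrable f c R) (a : A) :
    (∮ z in C(c, R), f z) * a = ∮ z in C(c, R), f z * a := by
  simpa [circleIntegral] using
    (((ContinuousLinearMap.mul ℂ A).flip a).intervalIntegral_comp_comm hf.out).symm

lemma Commute.circleIntegral_right {x : A} {f : ℂ → A} {c : ℂ} {R : ℝ}
    (h : ∀ z, Commute x (f z)) : Commute x (∮ z in C(c, R), f z) := by
  by_cases hf : CircleIntegrable f c R
  · simp only [Commute, SemiconjBy, mul_circleIntegral hf, circleIntegral_mul hf, (h _).eq]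
  · simp [circleIntegral.integral_undef hf]

end CircleIntegral

lemma sub_ne_zero_of_mem_sphere {z w : ℂ} {r₁ r₂ : ℝ} (hz : z ∈ sphere 0 r₁)
    (hw : w ∈ sphere 0 r₂) (h : r₁ ≠ r₂) : w - z ≠ 0 := by
  rw [mem_sphere_zero_iff_norm] at hz hw
  exact sub_ne_zero.mpr fun hwz => h (hz ▸ hw ▸ congrArg norm hwz.symm)

lemma sphere_subset_ball_sdiff_zero {r r₀ : ℝ} (h₀ : 0 < r) (h : r < r₀) :
    sphere (0 : ℂ) r ⊆ ball 0 r₀ \ {0} := fun z hz =>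
  ⟨mem_ball_zero_iff.mpr ((mem_sphere_zero_iff_norm.mp hz).trans_lt h),
    ne_zero_of_mem_sphere h₀.ne' ⟨z, hz⟩⟩

section ResolventIntegral

variable {A : Type*} [NormedRing A] [NormedAlgebra ℂ A]

noncomputable def resolventIntegral (s : A) (g : ℂ → ℂ) (r : ℝ) : A :=
  ∮ z in C(0, r), g z • resolvent s z

variable {s : A} {g h : ℂ → ℂ} {r r₁ r₂ : ℝ}

lemma resolventIntegral_congr {g' : ℂ → ℂ} (hr : 0 ≤ r) (hgg' : EqOn g g' (sphere 0 r)) :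
    resolventIntegral s g r = resolventIntegral s g' r :=
  circleIntegral.integral_congr hr fun z hz => by simp only [hgg' hz]

variable [CompleteSpace A]

lemma differentiableOn_resolvent (s : A) :
    DifferentiableOn ℂ (resolvent s) (resolventSet ℂ s) :=
  fun _ hz => (spectrum.hasDerivAt_resolvent_const_left hz).differentiableAt.differentiableWithinAt

lemma circleIntegrable_smul_resolvent (hr : 0 ≤ r) (hs : sphere 0 r ⊆ resolventSet ℂ s)
    (hg : ContinuousOn g (sphere 0 r)) :
    CircleIntegrable (fun z => g z • resolvent s z) 0 r :=
  (hg.smul ((differentiableOn_resolvent s).continuousOn.mono hs)).circleIntegrable hr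

lemma continuous_resolvent_circleMap (hr : 0 ≤ r) (hs : sphere 0 r ⊆ resolventSet ℂ s) :
    Continuous fun θ => resolvent s (circleMap 0 r θ) :=
  (differentiableOn_resolvent s).continuousOn.comp_continuous (continuous_circleMap 0 r)
    fun θ => hs (circleMap_mem_sphere 0 hr θ)

lemma Commute.resolventIntegral_right {x : A} (hx : Commute x s) (g : ℂ → ℂ) (r : ℝ) :
    Commute x (resolventIntegral s g r) :=
  Commute.circleIntegral_right fun z => (hx.resolvent_right z).smul_right (g z)

lemma resolventIntegral_eq_of_annulus (h₁ : 0 < r₁) (h₁₂ : r₁ ≤ r₂)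
    (hs : closedBall 0 r₂ \ ball 0 r₁ ⊆ resolventSet ℂ s)
    (hg : DifferentiableOn ℂ g (closedBall 0 r₂ \ ball 0 r₁)) :
    resolventIntegral s g r₂ = resolventIntegral s g r₁ := by
  have hd := hg.smul ((differentiableOn_resolvent s).mono hs)
  refine Complex.circleIntegral_eq_of_differentiable_on_annulus_off_countable h₁ h₁₂
    countable_empty hd.continuousOn fun z hz => hd.differentiableAt ?_
  exact mem_of_superset ((isOpen_ball.sdiff isClosed_closedBall).mem_nhds hz.1)
    (sdiff_subset_sdiff ball_subset_closedBall ball_subset_closedBall)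

lemma algebraMap_sub_mul_resolventIntegral (hr : 0 ≤ r) (hs : sphere 0 r ⊆ resolventSet ℂ s)
    (hg : ContinuousOn g (sphere 0 r)) (μ : ℂ) :
    (algebraMap ℂ A μ - s) * resolventIntegral s g r =
      resolventIntegral s (fun z => (μ - z) * g z) r + (∮ z in C(0, r), g z) • 1 := by
  have h₁ : CircleIntegrable (fun z => ((μ - z) * g z) • resolvent s z) 0 r :=
    circleIntegrable_smul_resolvent hr hs ((continuousOn_const.sub continuousOn_id).mul hg)
  have h₂ : CircleIntegrable (fun z => g z • (1 : A)) 0 r :=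
    (hg.smul continuousOn_const).circleIntegrable hr
  rw [resolventIntegral, mul_circleIntegral (circleIntegrable_smul_resolvent hr hs hg),
    circleIntegral.integral_congr hr (g := fun z => ((μ - z) * g z) • resolvent s z + g z • 1),
    circleIntegral.integral_add h₁ h₂, circleIntegral.integral_smul_const, resolventIntegral]
  intro z hz
  simp only
  rw [mul_smul_comm, algebraMap_sub_mul_resolvent (hs hz), smul_add, smul_smul, mul_comm]

lemma resolvent_mul_resolventIntegral {z : ℂ} (hz : z ∈ resolventSet ℂ s) (hr : 0 ≤ r)
    (hzr : ‖z‖ ≠ r) (hs : sphere 0 r ⊆ resolventSet ℂ s) (hh : ContinuousOn h (sphere 0 r)) :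
    resolvent s z * resolventIntegral s h r = (∮ w in C(0, r), h w * (w - z)⁻¹) • resolvent s z
      - resolventIntegral s (fun w => h w * (w - z)⁻¹) r := by
  have hz' : z ∈ sphere 0 ‖z‖ := mem_sphere_zero_iff_norm.mpr rfl
  have hk : ContinuousOn (fun w => h w * (w - z)⁻¹) (sphere 0 r) :=
    hh.mul ((continuousOn_id.sub continuousOn_const).inv₀
      fun w hw => sub_ne_zero_of_mem_sphere hz' hw hzr)
  have h₁ : CircleIntegrable (fun w => (h w * (w - z)⁻¹) • resolvent s z) 0 r :=
    (hk.smul continuousOn_const).circleIntegrable hr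
  rw [resolventIntegral, mul_circleIntegral (circleIntegrable_smul_resolvent hr hs hh),
    circleIntegral.integral_congr hr
      (g := fun w => (h w * (w - z)⁻¹) • resolvent s z - (h w * (w - z)⁻¹) • resolvent s w),
    circleIntegral.integral_sub h₁ (circleIntegrable_smul_resolvent hr hs hk),
    circleIntegral.integral_smul_const, resolventIntegral]
  intro w hw
  simp only
  rw [mul_smul_comm, ← smul_sub, resolvent_sub_resolvent_eq_smul_mul hz (hs hw), smul_smul,
    mul_assoc, inv_mul_cancel₀ (sub_ne_zero_of_mem_sphere hz' hw hzr), mul_one]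

-- The resolvent identity `R z * R w = (w - z)⁻¹ • (R z - R w)` splits the product into two
-- double integrals; after Fubini, the inner scalar integrals are the constants `a` and `b`.
lemma resolventIntegral_mul_resolventIntegral (h₁ : 0 < r₁) (h₂ : 0 < r₂) (h₁₂ : r₁ ≠ r₂)
    (hs₁ : sphere 0 r₁ ⊆ resolventSet ℂ s) (hs₂ : sphere 0 r₂ ⊆ resolventSet ℂ s)
    (hg : ContinuousOn g (sphere 0 r₁)) (hh : ContinuousOn h (sphere 0 r₂)) {a b : ℂ}
    (ha : ∀ z ∈ sphere 0 r₁, ∮ w in C(0, r₂), h w * (w - z)⁻¹ = a)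
    (hb : ∀ w ∈ sphere 0 r₂, ∮ z in C(0, r₁), g z * (w - z)⁻¹ = b) :
    resolventIntegral s g r₁ * resolventIntegral s h r₂ =
      a • resolventIntegral s g r₁ - b • resolventIntegral s h r₂ := by
  set Y := resolventIntegral s h r₂
  have hgR := circleIntegrable_smul_resolvent h₁.le hs₁ hg
  have hgR₁ : CircleIntegrable (fun z => a • (g z • resolvent s z)) 0 r₁ := hgR.smul a
  have hgR₂ : CircleIntegrable (fun z => g z • resolvent s z * Y) 0 r₁ := hgR.mul_const Y
  have hcont : Continuous fun q : ℝ × ℝ => (g (circleMap 0 r₁ q.1) * (h (circleMap 0 r₂ q.2) *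
      (circleMap 0 r₂ q.2 - circleMap 0 r₁ q.1)⁻¹)) • resolvent s (circleMap 0 r₂ q.2) := by
    have hc₁ := continuous_circleMap 0 r₁
    have hc₂ := continuous_circleMap 0 r₂
    exact ((((hg.comp_continuous hc₁ (circleMap_mem_sphere 0 h₁.le)).comp continuous_fst).mul
      (((hh.comp_continuous hc₂ (circleMap_mem_sphere 0 h₂.le)).comp continuous_snd).mul
        (((hc₂.comp continuous_snd).sub (hc₁.comp continuous_fst)).inv₀ fun q =>
          sub_ne_zero_of_mem_sphere (circleMap_mem_sphere 0 h₁.le q.1)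
            (circleMap_mem_sphere 0 h₂.le q.2) h₁₂))).smul
      ((continuous_resolvent_circleMap h₂.le hs₂).comp continuous_snd))
  have key : a • resolventIntegral s g r₁ - resolventIntegral s g r₁ * Y = b • Y := by
    calc a • resolventIntegral s g r₁ - resolventIntegral s g r₁ * Y
        = ∮ z in C(0, r₁), ∮ w in C(0, r₂), (g z * (h w * (w - z)⁻¹)) • resolvent s w := by
          rw [resolventIntegral, circleIntegral_mul hgR, ← circleIntegral.integral_smul,
            ← circleIntegral.integral_sub hgR₁ hgR₂]
          refine circleIntegral.integral_congr h₁.le fun z hz => ?_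
          rw [smul_mul_assoc, resolvent_mul_resolventIntegral (hs₁ hz) h₂.le
            (by rwa [mem_sphere_zero_iff_norm.mp hz]) hs₂ hh, ha z hz, smul_sub, smul_comm,
            sub_sub_cancel, resolventIntegral, ← circleIntegral.integral_smul]
          simp only [smul_smul]
      _ = ∮ w in C(0, r₂), (h w * b) • resolvent s w := by
          rw [circleIntegral_comm hcont]
          refine circleIntegral.integral_congr h₂.le fun w hw => ?_
          simp only [← hb w hw, ← circleIntegral.integral_const_mul,
            circleIntegral.integral_smul_const, mul_left_comm (g _)]
      _ = b • Y := by
          simp only [Y, resolventIntegral, mul_comm _ b, mul_smul, circleIntegral.integral_smul]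
  rw [← key]
  abel

end ResolventIntegral

lemma circleIntegral_inv_sub_eq_zero {c w : ℂ} {R : ℝ} (hR : 0 ≤ R) (hw : w ∉ closedBall c R) :
    ∮ z in C(c, R), (w - z)⁻¹ = 0 := by
  have hne : ∀ z ∈ closedBall c R, w - z ≠ 0 := fun z hz => sub_ne_zero.mpr fun h => hw (h ▸ hz)
  exact circleIntegral_eq_zero_of_differentiable_on_off_countable hR countable_empty
    ((continuousOn_const.sub continuousOn_id).inv₀ hne) fun z hz =>
      ((differentiableAt_const w).sub differentiableAt_id).inv (hne z (ball_subset_closedBall hz.1))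

lemma circleIntegral_inv_mul_inv_sub_eq_zero {z : ℂ} {R : ℝ} (hz : z ∈ ball (0 : ℂ) R)
    (hz₀ : z ≠ 0) : ∮ w in C(0, R), w⁻¹ * (w - z)⁻¹ = 0 := by
  have hR : 0 < R := pos_of_mem_ball hz
  have hz' : ‖z‖ ≠ R := (mem_ball_zero_iff.mp hz).ne
  have h₀ : ∀ w ∈ sphere (0 : ℂ) R, w ≠ 0 := fun w hw => ne_zero_of_mem_sphere hR.ne' ⟨w, hw⟩
  have hzw : ∀ w ∈ sphere (0 : ℂ) R, w - z ≠ 0 := fun w hw =>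
    sub_ne_zero_of_mem_sphere (mem_sphere_zero_iff_norm.mpr rfl) hw hz'
  rw [circleIntegral.integral_congr hR.le (g := fun w => z⁻¹ * (w - z)⁻¹ - z⁻¹ * (w - 0)⁻¹),
    circleIntegral.integral_sub, circleIntegral.integral_const_mul,
    circleIntegral.integral_const_mul, circleIntegral.integral_sub_inv_of_mem_ball hz,
    circleIntegral.integral_sub_inv_of_mem_ball (mem_ball_self hR), sub_self]
  · exact (continuousOn_const.mul
      ((continuousOn_id.sub continuousOn_const).inv₀ hzw)).circleIntegrable hR.le
  · exact (continuousOn_const.mul ((continuousOn_id.sub continuousOn_const).inv₀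
      fun w hw => by simpa using h₀ w hw)).circleIntegrable hR.le
  · intro w hw
    simp only [sub_zero]
    field_simp [h₀ w hw, hzw w hw, hz₀]
    ring

section Riesz

variable {A : Type*} [NormedRing A] [NormedAlgebra ℂ A] [CompleteSpace A] {s : A}
  {r₀ r r₁ r₂ : ℝ}

noncomputable def rieszProjection (s : A) (r : ℝ) : A :=
  (2 * π * I)⁻¹ • resolventIntegral s (fun _ => 1) r

lemma resolventIntegral_eq_of_punctured_ball {g : ℂ → ℂ} (H : ball 0 r₀ \ {0} ⊆ resolventSet ℂ s)
    (hg : DifferentiableOn ℂ g (ball 0 r₀ \ {0})) (h₁ : 0 < r₁) (h₁' : r₁ < r₀) (h₂ : 0 < r₂)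
    (h₂' : r₂ < r₀) : resolventIntegral s g r₁ = resolventIntegral s g r₂ := by
  wlog h₁₂ : r₁ ≤ r₂ generalizing r₁ r₂
  · exact (this h₂ h₂' h₁ h₁' (le_of_not_ge h₁₂)).symm
  have hsub : closedBall 0 r₂ \ ball 0 r₁ ⊆ ball (0 : ℂ) r₀ \ {0} := fun z ⟨hz₂, hz₁⟩ => by
    rw [mem_closedBall_zero_iff] at hz₂
    rw [mem_ball_zero_iff, not_lt] at hz₁
    exact ⟨mem_ball_zero_iff.mpr (hz₂.trans_lt h₂'), fun hz => by
      rw [mem_singleton_iff.mp hz, norm_zero] at hz₁; linarith⟩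
  exact (resolventIntegral_eq_of_annulus h₁ h₁₂ (hsub.trans H) (hg.mono hsub)).symm

lemma rieszProjection_eq (H : ball 0 r₀ \ {0} ⊆ resolventSet ℂ s) (h₁ : 0 < r₁) (h₁' : r₁ < r₀)
    (h₂ : 0 < r₂) (h₂' : r₂ < r₀) : rieszProjection s r₁ = rieszProjection s r₂ := by
  rw [rieszProjection, rieszProjection,
    resolventIntegral_eq_of_punctured_ball H (differentiableOn_const 1) h₁ h₁' h₂ h₂']

lemma isIdempotentElem_rieszProjection (H : ball 0 r₀ \ {0} ⊆ resolventSet ℂ s) (h₀ : 0 < r)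
    (h : r < r₀) : IsIdempotentElem (rieszProjection s r) := by
  obtain ⟨r', hr', hr'₀⟩ := exists_between h
  have hprod := resolventIntegral_mul_resolventIntegral (s := s) (g := fun _ => 1)
    (h := fun _ => 1) (a := 2 * π * I) (b := 0) h₀ (h₀.trans hr') hr'.ne
    ((sphere_subset_ball_sdiff_zero h₀ h).trans H)
    ((sphere_subset_ball_sdiff_zero (h₀.trans hr') hr'₀).trans H) continuousOn_const
    continuousOn_const
    (fun z hz => by
      simpa using circleIntegral.integral_sub_inv_of_mem_ball
        (mem_ball_zero_iff.mpr ((mem_sphere_zero_iff_norm.mp hz).trans_lt hr')))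
    (fun w hw => by
      simpa using circleIntegral_inv_sub_eq_zero h₀.le
        (by rw [mem_closedBall_zero_iff, mem_sphere_zero_iff_norm.mp hw, not_le]; exact hr'))
  calc rieszProjection s r * rieszProjection s r
      = rieszProjection s r * rieszProjection s r' := by
        rw [← rieszProjection_eq H h₀ h (h₀.trans hr') hr'₀]
    _ = rieszProjection s r := by
        rw [rieszProjection, rieszProjection, smul_mul_smul_comm, hprod, zero_smul, sub_zero,
          smul_smul, mul_assoc, inv_mul_cancel₀ two_pi_I_ne_zero, mul_one]

lemma rieszProjection_mul_resolventIntegral_inv (H : ball 0 r₀ \ {0} ⊆ resolventSet ℂ s)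
    (h₁ : 0 < r₁) (h₁₂ : r₁ < r₂) (h₂ : r₂ < r₀) :
    rieszProjection s r₁ * resolventIntegral s (·⁻¹) r₂ = 0 := by
  have hs₂ := sphere_subset_ball_sdiff_zero (h₁.trans h₁₂) h₂
  have hprod := resolventIntegral_mul_resolventIntegral (s := s) (g := fun _ => 1)
    (h := (·⁻¹)) (a := 0) (b := 0) h₁ (h₁.trans h₁₂) h₁₂.ne
    ((sphere_subset_ball_sdiff_zero h₁ (h₁₂.trans h₂)).trans H) (hs₂.trans H) continuousOn_const
    (continuousOn_inv₀.mono fun w hw => (hs₂ hw).2)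
    (fun z hz => circleIntegral_inv_mul_inv_sub_eq_zero
      (mem_ball_zero_iff.mpr ((mem_sphere_zero_iff_norm.mp hz).trans_lt h₁₂))
      (ne_zero_of_mem_sphere h₁.ne' ⟨z, hz⟩))
    (fun w hw => by
      simpa using circleIntegral_inv_sub_eq_zero h₁.le
        (by rw [mem_closedBall_zero_iff, mem_sphere_zero_iff_norm.mp hw, not_le]; exact h₁₂))
  rw [rieszProjection, smul_mul_assoc, hprod, zero_smul, zero_smul, sub_zero, smul_zero]

lemma mul_resolventIntegral_inv (h₀ : 0 < r) (hs : sphere 0 r ⊆ resolventSet ℂ s) :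
    s * resolventIntegral s (·⁻¹) r = (2 * π * I) • (rieszProjection s r - 1) := by
  have hne : ∀ z ∈ sphere (0 : ℂ) r, z ≠ 0 := fun z hz => ne_zero_of_mem_sphere h₀.ne' ⟨z, hz⟩
  have h := algebraMap_sub_mul_resolventIntegral (g := (·⁻¹)) h₀.le hs
    (continuousOn_inv₀.mono hne) 0
  have hneg : resolventIntegral s (fun _ => -1) r = -resolventIntegral s (fun _ => 1) r := by
    rw [resolventIntegral, resolventIntegral, ← neg_one_smul ℂ (∮ z in C(0, r), _),
      ← circleIntegral.integral_smul]
    simp only [neg_smul, one_smul]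
  have hT : ∮ z in C(0, r), z⁻¹ = 2 * π * I := by
    simpa using circleIntegral.integral_sub_center_inv 0 h₀.ne'
  rw [resolventIntegral_congr h₀.le (g := fun z => (0 - z) * z⁻¹) (g' := fun _ => -1) fun z hz => by
      simp only [zero_sub, neg_mul, mul_inv_cancel₀ (hne z hz)],
    hneg, hT, map_zero, zero_sub, neg_mul] at h
  rw [rieszProjection, smul_sub, smul_smul, mul_inv_cancel₀ two_pi_I_ne_zero, one_smul,
    ← neg_inj, h]
  abel

lemma isUnit_algebraMap_sub_mul_rieszProjection (H : ball 0 r₀ \ {0} ⊆ resolventSet ℂ s)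
    (h₀ : 0 < r) (h : r < r₀) {μ : ℂ} (hμ : μ ≠ 0) :
    IsUnit (algebraMap ℂ A μ - s * rieszProjection s r) := by
  obtain ⟨r', hr'₀, hr'⟩ := exists_between (lt_min h₀ (norm_pos_iff.mpr hμ))
  have hr'r : r' < r := hr'.trans_le (min_le_left _ _)
  have hr'μ : r' < ‖μ‖ := hr'.trans_le (min_le_right _ _)
  have hs' := (sphere_subset_ball_sdiff_zero hr'₀ (hr'r.trans h)).trans H
  have hμz : ∀ z ∈ sphere (0 : ℂ) r', μ - z ≠ 0 := fun z hz =>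
    sub_ne_zero_of_mem_sphere hz (mem_sphere_zero_iff_norm.mpr rfl) hr'μ.ne
  set c := (2 * π * I)⁻¹ • resolventIntegral s (fun z => (μ - z)⁻¹) r'
  have hc : (algebraMap ℂ A μ - s) * c = rieszProjection s r := by
    rw [mul_smul_comm, algebraMap_sub_mul_resolventIntegral (g := fun z => (μ - z)⁻¹) hr'₀.le hs'
      ((continuousOn_const.sub continuousOn_id).inv₀ hμz),
      resolventIntegral_congr hr'₀.le (g' := fun _ => 1) fun z hz => mul_inv_cancel₀ (hμz z hz),
      circleIntegral_inv_sub_eq_zero hr'₀.le (by rwa [mem_closedBall_zero_iff, not_le]),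
      zero_smul, add_zero, ← rieszProjection, rieszProjection_eq H hr'₀ (hr'r.trans h) h₀ h]
  have hsP : Commute s (rieszProjection s r) :=
    ((Commute.refl s).resolventIntegral_right _ _).smul_right _
  exact isUnit_algebraMap_sub_mul_of_isIdempotentElem hμ (isIdempotentElem_rieszProjection H h₀ h)
    hsP (((Commute.refl s).resolventIntegral_right _ _).smul_right _).symm
    ((hsP.symm.resolventIntegral_right _ _).smul_right _).symm hc

theorem gDrazinInvertible_of_eventually_mem_resolventSet
    (hs : ∀ᶠ z in 𝓝[≠] (0 : ℂ), z ∈ resolventSet ℂ s) : GDrazinInvertible s := by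
  obtain ⟨r₀, hr₀, H⟩ := Metric.mem_nhdsWithin_iff.mp hs
  have h₁ : 0 < r₀ / 3 := by positivity
  have h₁₂ : r₀ / 3 < r₀ / 2 := by linarith
  have h₂ : r₀ / 2 < r₀ := by linarith
  set p := rieszProjection s (r₀ / 3)
  set b := -((2 * π * I)⁻¹ • resolventIntegral s (·⁻¹) (r₀ / 2))
  have hsb : s * b = 1 - p := by
    rw [mul_neg, mul_smul_comm, mul_resolventIntegral_inv (h₁.trans h₁₂)
      ((sphere_subset_ball_sdiff_zero (h₁.trans h₁₂) h₂).trans H), smul_smul,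
      inv_mul_cancel₀ two_pi_I_ne_zero, one_smul, neg_sub,
      ← rieszProjection_eq H h₁ (h₁₂.trans h₂) (h₁.trans h₁₂) h₂]
  have hbs : b * s = s * b :=
    ((((Commute.refl s).resolventIntegral_right _ _).smul_right _).neg_right).eq.symm
  have hpb : p * b = 0 := by
    rw [mul_neg, mul_smul_comm, rieszProjection_mul_resolventIntegral_inv H h₁ h₁₂ h₂, smul_zero,
      neg_zero]
  refine ⟨b, hbs.symm, by rw [hbs, hsb, sub_mul, one_mul, hpb, sub_zero], ?_⟩
  rw [hsb, sub_sub_cancel]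
  exact spectralRadius_eq_zero_iff.mpr fun μ hμ => spectrum.mem_resolventSet_iff.mpr
    (isUnit_algebraMap_sub_mul_rieszProjection H h₁ (h₁₂.trans h₂) hμ)

lemma gDrazinInvertible_iff_eventually_mem_resolventSet {a : A} :
    GDrazinInvertible a ↔ ∀ᶠ μ in 𝓝[≠] (0 : ℂ), μ ∈ resolventSet ℂ a := by
  refine ⟨fun ⟨b, hab, hbab, hq⟩ => ?_, gDrazinInvertible_of_eventually_mem_resolventSet⟩
  have hb : ∀ᶠ μ in 𝓝 (0 : ℂ), IsUnit (1 - algebraMap ℂ A μ * b) :=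
    (by fun_prop : Continuous fun μ : ℂ => 1 - algebraMap ℂ A μ * b).continuousAt.eventually_mem
      (Units.isOpen.mem_nhds (by simp))
  filter_upwards [self_mem_nhdsWithin, nhdsWithin_le_nhds hb] with μ hμ hμb
  exact spectrum.mem_resolventSet_iff.mpr <| isUnit_sub_of_isGDrazinInverse hab hbab
    (Algebra.commute_algebraMap_left μ a) (Algebra.commute_algebraMap_left μ b)
    (spectrum.mem_resolventSet_iff.mp (spectralRadius_eq_zero_iff.mp hq μ hμ)) hμb

end Riesz

lemma AnalyticAt.nhdsNE_le_map_nhdsNE {E : Type*} [NormedAddCommGroup E] [NormedSpace ℂ E]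
    {f : E → ℂ} {z₀ : E} (hf : AnalyticAt ℂ f z₀)
    (hnc : ¬ ∀ᶠ z in 𝓝 z₀, f z = f z₀) : 𝓝[≠] (f z₀) ≤ map f (𝓝[≠] z₀) := by
  intro t ht
  rw [mem_map, mem_nhdsWithin_iff_eventually] at ht
  rw [mem_nhdsWithin_iff_eventually]
  filter_upwards [hf.eventually_constant_or_nhds_le_map_nhds.resolve_left hnc (image_mem_map ht)]
  rintro _ ⟨z, hz, rfl⟩ hfz
  exact hz fun h => hfz (by rw [mem_singleton_iff.mp h]; rfl)

lemma Polynomial.not_eventually_eval_eq_zero {p : Polynomial ℂ} (hp : p ≠ 0) (z₀ : ℂ) :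
    ¬ ∀ᶠ z in 𝓝 z₀, p.eval z = 0 :=
  fun h => hp (p.eq_zero_of_infinite_isRoot (infinite_of_mem_nhds z₀ h))

section Cubic

variable {𝕜 A : Type*} [Field 𝕜] [Ring A] [Algebra 𝕜 A] {x₁ x₂ x₃ : A} {α₁ α₂ β : 𝕜}

lemma algebraMap_sub_mul_sub_mul_sub
    (h1 : x₁ * x₂ + x₁ * x₃ + x₂ * x₃ = α₁ • (1 : A) + α₂ • (x₁ + x₂ + x₃))
    (h2 : x₁ * x₂ * x₃ = β • (x₁ + x₂ + x₃)) (z : 𝕜) :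
    (algebraMap 𝕜 A z - x₁) * (algebraMap 𝕜 A z - x₂) * (algebraMap 𝕜 A z - x₃) =
      algebraMap 𝕜 A (z ^ 3 + α₁ * z) - (z ^ 2 - α₂ * z + β) • (x₁ + x₂ + x₃) := by
  simp only [Algebra.algebraMap_eq_smul_one, sub_mul, mul_sub, smul_mul_assoc, mul_smul_comm,
    one_mul, mul_one]
  linear_combination (norm := module) z • h1 - h2

lemma div_mem_resolventSet_add_add
    (h1 : x₁ * x₂ + x₁ * x₃ + x₂ * x₃ = α₁ • (1 : A) + α₂ • (x₁ + x₂ + x₃))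
    (h2 : x₁ * x₂ * x₃ = β • (x₁ + x₂ + x₃)) {z : 𝕜} (hz₁ : z ∈ resolventSet 𝕜 x₁)
    (hz₂ : z ∈ resolventSet 𝕜 x₂) (hz₃ : z ∈ resolventSet 𝕜 x₃) (hp : z ^ 2 - α₂ * z + β ≠ 0) :
    (z ^ 3 + α₁ * z) / (z ^ 2 - α₂ * z + β) ∈ resolventSet 𝕜 (x₁ + x₂ + x₃) := by
  rw [spectrum.mem_resolventSet_iff] at *
  have h : algebraMap 𝕜 A ((z ^ 3 + α₁ * z) / (z ^ 2 - α₂ * z + β)) - (x₁ + x₂ + x₃) =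
      algebraMap 𝕜 A (z ^ 2 - α₂ * z + β)⁻¹ *
        ((algebraMap 𝕜 A z - x₁) * (algebraMap 𝕜 A z - x₂) * (algebraMap 𝕜 A z - x₃)) := by
    rw [algebraMap_sub_mul_sub_mul_sub h1 h2, mul_sub, ← map_mul, ← Algebra.smul_def, smul_smul,
      inv_mul_cancel₀ hp, one_smul, div_eq_inv_mul]
  rw [h]
  exact ((isUnit_iff_ne_zero.mpr (inv_ne_zero hp)).map _).mul ((hz₁.mul hz₂).mul hz₃)

end Cubic

theorem stmt_7 {A : Type*} [NormedRing A] [NormedAlgebra ℂ A] [CompleteSpace A]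
    (x₁ x₂ x₃ : A) (α₁ α₂ β : ℂ) (hβ : β ≠ 0)
    (h1 : x₁ * x₂ + x₁ * x₃ + x₂ * x₃ = α₁ • (1 : A) + α₂ • (x₁ + x₂ + x₃))
    (h2 : x₁ * x₂ * x₃ = β • (x₁ + x₂ + x₃))
    (g1 : GDrazinInvertible x₁) (g2 : GDrazinInvertible x₂) (g3 : GDrazinInvertible x₃) :
    GDrazinInvertible (x₁ + x₂ + x₃) := by
  set f : ℂ → ℂ := fun z => (z ^ 3 + α₁ * z) / (z ^ 2 - α₂ * z + β)
  have hp : ∀ᶠ z in 𝓝 (0 : ℂ), z ^ 2 - α₂ * z + β ≠ 0 :=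
    (by fun_prop : Continuous fun z : ℂ => z ^ 2 - α₂ * z + β).continuousAt.eventually_ne
      (by simpa using hβ)
  have hf : ∀ᶠ z in 𝓝[≠] (0 : ℂ), f z ∈ resolventSet ℂ (x₁ + x₂ + x₃) := by
    filter_upwards [gDrazinInvertible_iff_eventually_mem_resolventSet.mp g1,
      gDrazinInvertible_iff_eventually_mem_resolventSet.mp g2,
      gDrazinInvertible_iff_eventually_mem_resolventSet.mp g3, nhdsWithin_le_nhds hp]
      with z hz₁ hz₂ hz₃ hz
    exact div_mem_resolventSet_add_add h1 h2 hz₁ hz₂ hz₃ hz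
  have hf₀ : f 0 = 0 := by simp [f]
  have hfa : AnalyticAt ℂ f 0 :=
    (by fun_prop : AnalyticAt ℂ (fun z : ℂ => z ^ 3 + α₁ * z) 0).div (by fun_prop)
      (by simpa using hβ)
  have hnc : ¬ ∀ᶠ z in 𝓝 0, f z = f 0 := by
    refine fun h => (Polynomial.X ^ 3 + Polynomial.C α₁ * Polynomial.X).not_eventually_eval_eq_zero
      (fun h0 => by simpa using congrArg (Polynomial.coeff · 3) h0) 0 ?_
    filter_upwards [h, hp] with z hz hpz
    simpa [f, hf₀, hpz] using hz
  rw [gDrazinInvertible_iff_eventually_mem_resolventSet, ← hf₀]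
  exact hfa.nhdsNE_le_map_nhdsNE hnc hf
end

section
/- Let p, q be idempotents in a complex unital Banach algebra A, m ∈ ℕ with m ≥ 1, and γ₁, λ₁, …, λ_m ∈ ℂ with λ₁γ₁ ≠ 0. Then λ₁p + γ₁q − λ₁pq + λ₂(pqp − (pq)²) + ⋯ + λ_m((pq)^{m−1}p − (pq)^m) is generalized Drazin invertible if and only if λ₁·1 − λ₁pq + λ₂(pqp − (pq)²) + ⋯ + λ_m((pq)^{m−1}p − (pq)^m) is generalized Drazin invertible. -/
/-!
The element `w = λ₁(p - pq) + ∑ᵢ λᵢ((pq)^{i-1}p - (pq)^i)` lies in `p A (1 - q)`, because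
`(pq)^k p - (pq)^{k+1} = p (qp)^k (1 - q)`. Hence `w q = 0` and `(1 - p) w = 0`, and the two
elements of the statement are `γ₁ q + w` and `λ₁ (1 - p) + w`. So it suffices that, for an
idempotent `e` and `α ≠ 0`, `α e + w` is generalized Drazin invertible iff `w` is, whenever
`w e = 0`, or `e w = 0` (the same statement in the opposite algebra).

Relative to `e ⊕ (1 - e)`, `M = α e + w` is upper triangular with diagonal `(α, (1 - e) w)`, and
both directions have explicit inverses. If `Y` is a g-Drazin inverse of `M`, then `Y e = α⁻¹ e`
and `w Y²` is one of `w`. If `D` is one of `w`, with spectral idempotent `π = 1 - w D` and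
quasinilpotent part `n = w π`, then `(1 - e) D + e (α - n)⁻¹ π` is one of `M`. Quasinilpotence
is only used through `σ(n) ⊆ {0}`, i.e. through the invertibility of `α - n` for `α ≠ 0`.
-/

open MulOpposite

section SpectralRadius

variable {𝕜 A : Type*} [NormedField 𝕜] [Ring A] [Algebra 𝕜 A]

lemma spectralRadius_eq_zero_iff_s13 {a : A} :
    spectralRadius 𝕜 a = 0 ↔ ∀ k ∈ spectrum 𝕜 a, k = 0 := by
  simp [spectralRadius]

lemma isUnit_algebraMap_sub_of_spectralRadius_eq_zero {a : A} (ha : spectralRadius 𝕜 a = 0)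
    {k : 𝕜} (hk : k ≠ 0) : IsUnit (algebraMap 𝕜 A k - a) :=
  spectrum.notMem_iff.mp fun hmem => hk (spectralRadius_eq_zero_iff_s13.mp ha k hmem)

lemma eq_zero_of_mul_eq_smul_of_spectralRadius_eq_zero {a x : A} (ha : spectralRadius 𝕜 a = 0)
    {k : 𝕜} (hk : k ≠ 0) (hx : a * x = k • x) : x = 0 :=
  (isUnit_algebraMap_sub_of_spectralRadius_eq_zero ha hk).mul_right_eq_zero.mp <| by
    rw [sub_mul, ← Algebra.smul_def, hx, sub_self]

lemma spectralRadius_add_mul_eq_zero {n e : A} (hn : spectralRadius 𝕜 n = 0) (hne : n * e = 0)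
    (y : A) : spectralRadius 𝕜 (n + e * y * n) = 0 := by
  refine spectralRadius_eq_zero_iff_s13.mpr fun k hk => by_contra fun hk0 => spectrum.mem_iff.mp hk ?_
  set c := e * y * n
  have hnc : n * c = 0 := by rw [← mul_assoc, ← mul_assoc, hne, zero_mul, zero_mul]
  have hcc : c * c = 0 := by rw [mul_assoc, hnc, mul_zero]
  have hfactor : algebraMap 𝕜 A k - (n + c) = (algebraMap 𝕜 A k - n) * (1 - k⁻¹ • c) := by
    rw [mul_sub, mul_one, mul_smul_comm, sub_mul, ← Algebra.smul_def, hnc, sub_zero, smul_smul,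
      inv_mul_cancel₀ hk0, one_smul, sub_sub]
  have hnil : IsNilpotent (k⁻¹ • c) := ⟨2, by rw [pow_two, smul_mul_smul_comm, hcc, smul_zero]⟩
  rw [hfactor]
  exact (isUnit_algebraMap_sub_of_spectralRadius_eq_zero hn hk0).mul hnil.isUnit_one_sub

lemma spectralRadius_mul_comm (a b : A) :
    spectralRadius 𝕜 (a * b) = spectralRadius 𝕜 (b * a) := by
  have key : ∀ x y : A, spectralRadius 𝕜 (x * y) ≤ spectralRadius 𝕜 (y * x) := fun x y =>
    iSup₂_le fun k hk => by
      rcases eq_or_ne k 0 with rfl | hk0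
      · simp
      · have hk' : k ∈ spectrum 𝕜 (y * x) \ {0} := by
          rw [← spectrum.nonzero_mul_comm]
          exact ⟨hk, hk0⟩
        exact le_iSup₂ (f := fun k (_ : k ∈ spectrum 𝕜 (y * x)) => (‖k‖₊ : ENNReal)) k hk'.1
  exact (key a b).antisymm (key b a)

lemma spectrum_op (a : A) : spectrum 𝕜 (op a) = spectrum 𝕜 a := by
  ext k
  rw [spectrum.mem_iff, spectrum.mem_iff, ← isUnit_op (m := algebraMap 𝕜 A k - a)]
  rfl

lemma spectralRadius_op (a : A) : spectralRadius 𝕜 (op a) = spectralRadius 𝕜 a := by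
  rw [spectralRadius, spectrum_op, spectralRadius]

end SpectralRadius

section Resolvent

variable {R A : Type*} [Semifield R] [Ring A] [Algebra R A]

lemma Units.inv_mul_eq_inv_smul_of_mul_eq_zero (u : Aˣ) {n x : A} {α : R} (hα : α ≠ 0)
    (hu : ↑u = algebraMap R A α - n) (hnx : n * x = 0) : ↑u⁻¹ * x = α⁻¹ • x := by
  have hux : ↑u * x = α • x := by rw [hu, sub_mul, ← Algebra.smul_def, hnx, sub_zero]
  calc ↑u⁻¹ * x = α⁻¹ • (↑u⁻¹ * (α • x)) := by
        rw [mul_smul_comm, smul_smul, inv_mul_cancel₀ hα, one_smul]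
    _ = α⁻¹ • x := by rw [← hux, u.inv_mul_cancel_left]

lemma Units.inv_mul_eq_smul_inv_mul_sub (u : Aˣ) {n π : A} {α : R}
    (hu : ↑u = algebraMap R A α - n) (hnπ : n * π = n) : ↑u⁻¹ * n = α • (↑u⁻¹ * π) - π := by
  calc ↑u⁻¹ * n = ↑u⁻¹ * (α • π - ↑u * π) := by
        rw [hu, sub_mul, ← Algebra.smul_def, hnπ, sub_sub_cancel]
    _ = α • (↑u⁻¹ * π) - π := by rw [mul_sub, mul_smul_comm, u.inv_mul_cancel_left]

end Resolvent

lemma pow_mul_sub_pow_succ {R : Type*} [Ring R] (p q : R) (k : ℕ) :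
    (p * q) ^ k * p - (p * q) ^ (k + 1) = p * (q * p) ^ k * (1 - q) := by
  rw [pow_succ, ← mul_assoc, mul_pow_mul, mul_sub, mul_one]

lemma smul_add_mul_one_sub_mul_add_mul {R A : Type*} [CommSemiring R] [Ring A] [Algebra R A]
    {e w : A} (he : IsIdempotentElem e) (hwe : w * e = 0) (α : R) (D Z : A) :
    (α • e + w) * ((1 - e) * D + e * Z) = w * D + α • (e * Z) := by
  have hwf : w * (1 - e) = w := by rw [mul_sub, mul_one, hwe, sub_zero]
  simp only [add_mul, mul_add, smul_mul_assoc, ← mul_assoc, he.mul_one_sub_self, he.eq, hwf, hwe,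
    smul_zero, zero_add, add_zero]

section GDrazin

variable {A : Type*} [NormedRing A] [NormedAlgebra ℂ A]

lemma IsGDrazinInverse.isIdempotentElem_mul_s13 {a b : A} (h : IsGDrazinInverse a b) :
    IsIdempotentElem (a * b) := by
  show a * b * (a * b) = a * b
  rw [mul_assoc, ← mul_assoc b, h.2.1]

lemma IsGDrazinInverse.mul_eq_zero_of_mul_eq_zero {a b x : A} (h : IsGDrazinInverse a b)
    (hx : a * x = 0) : b * x = 0 := by
  have hb : b = b * b * a := by rw [mul_assoc, ← h.1, ← mul_assoc, h.2.1]
  rw [hb, mul_assoc, hx, mul_zero]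

lemma IsGDrazinInverse.mul_eq_inv_smul {a b x : A} (hab : IsGDrazinInverse a b) {α : ℂ}
    (hα : α ≠ 0) (hx : a * x = α • x) : b * x = α⁻¹ • x := by
  set ξ := x - a * b * x
  have hcomm : Commute a (a * b) := (Commute.refl a).mul_right hab.1
  have hξ : a * (1 - a * b) * ξ = α • ξ := by
    have hproj : a * b * ξ = 0 := by
      rw [mul_sub, ← mul_assoc, hab.isIdempotentElem_mul_s13.eq, sub_self]
    rw [mul_assoc, sub_mul, one_mul, hproj, sub_zero, mul_sub, hcomm.left_comm, hx,
      mul_smul_comm, smul_sub]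
  have hfix : a * b * x = x :=
    (sub_eq_zero.mp (eq_zero_of_mul_eq_smul_of_spectralRadius_eq_zero hab.2.2 hα hξ)).symm
  calc b * x = α⁻¹ • (b * (α • x)) := by
        rw [mul_smul_comm, smul_smul, inv_mul_cancel₀ hα, one_smul]
    _ = α⁻¹ • x := by rw [← hx, ← mul_assoc, ← hab.1, hfix]

lemma IsGDrazinInverse.commute_one_sub_mul {a b : A} (h : IsGDrazinInverse a b) :
    Commute (1 - a * b) a :=
  (Commute.one_left a).sub_left ((Commute.refl a).mul_right h.1).symm

lemma GDrazinInvertible.of_smul_idempotent_add {e w : A} (he : IsIdempotentElem e)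
    (hwe : w * e = 0) {α : ℂ} (hα : α ≠ 0) (h : GDrazinInvertible (α • e + w)) :
    GDrazinInvertible w := by
  obtain ⟨Y, hY⟩ := h
  set M := α • e + w
  have hMe : M * e = α • e := by rw [add_mul, smul_mul_assoc, he.eq, hwe, add_zero]
  have hYe : Y * e = α⁻¹ • e := hY.mul_eq_inv_smul hα hMe
  have hMf : M * (1 - e) = w := by rw [mul_sub, mul_one, hMe, add_sub_cancel_left]
  have hwM : w * M = w * w := by rw [mul_add, mul_smul_comm, hwe, smul_zero, zero_add]
  have hYYM : Y * Y * M = Y := by rw [mul_assoc, ← hY.1, ← mul_assoc, hY.2.1]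
  have hMYY : M * (Y * Y) = Y := by rw [← mul_assoc, hY.1, hY.2.1]
  have hYw : Y * w = Y * M - e := by
    rw [← hMf, ← mul_assoc, mul_sub, mul_one, ← hY.1, mul_assoc, hYe, mul_smul_comm, hMe,
      smul_smul, inv_mul_cancel₀ hα, one_smul]
  set D := w * (Y * Y)
  have hwD : w * D = w * Y := by rw [← mul_assoc, ← hwM, mul_assoc, hMYY]
  have hDw : D * w = w * Y := by
    rw [mul_assoc, mul_assoc, hYw, mul_sub, ← mul_assoc, hYYM, hYe, mul_sub, mul_smul_comm, hwe,
      smul_zero, sub_zero]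
  have hq : w * (1 - w * Y) = M * ((1 - e) * (1 - M * Y)) := by
    rw [← mul_assoc, hMf, mul_sub, mul_sub, ← mul_assoc, ← hwM, mul_assoc]
  have hqe : M * (1 - M * Y) * e = 0 := by
    rw [mul_assoc, sub_mul, one_mul, mul_assoc, hYe, mul_smul_comm, hMe, smul_smul,
      inv_mul_cancel₀ hα, one_smul, sub_self, mul_zero]
  refine ⟨D, hwD.trans hDw.symm, ?_, ?_⟩
  · rw [hDw, mul_assoc, ← mul_assoc Y, hYw, sub_mul, mul_assoc, hMYY, mul_sub, ← mul_assoc w e,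
      hwe, zero_mul, sub_zero]
  · calc spectralRadius ℂ (w * (1 - w * D))
        = spectralRadius ℂ ((1 - e) * (1 - M * Y) * M) := by
          rw [hwD, hq, spectralRadius_mul_comm]
      _ = spectralRadius ℂ (M * (1 - M * Y) * (1 - e)) := by
          rw [mul_assoc, hY.commute_one_sub_mul.eq, spectralRadius_mul_comm]
      _ = 0 := by rw [mul_sub, mul_one, hqe, sub_zero, hY.2.2]

lemma IsGDrazinInverse.smul_idempotent_add {e w D : A} (hD : IsGDrazinInverse w D)
    (he : IsIdempotentElem e) (hwe : w * e = 0) {α : ℂ} (hα : α ≠ 0) (u : Aˣ)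
    (hu : ↑u = algebraMap ℂ A α - w * (1 - w * D)) :
    IsGDrazinInverse (α • e + w) ((1 - e) * D + e * (↑u⁻¹ * (1 - w * D))) := by
  set π := 1 - w * D with hπdef
  set n := w * π with hndef
  set V : A := ↑u⁻¹ with hVdef
  have hn : spectralRadius ℂ n = 0 := hD.2.2
  clear_value V n π
  have hπ : IsIdempotentElem π := hπdef ▸ hD.isIdempotentElem_mul_s13.one_sub
  have hπw : π * w = n := by rw [hndef, hπdef, hD.commute_one_sub_mul.eq]
  have hnπ : n * π = n := by rw [hndef, mul_assoc, hπ.eq]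
  have hDe : D * e = 0 := hD.mul_eq_zero_of_mul_eq_zero hwe
  have hπe : π * e = e := by rw [hπdef, sub_mul, one_mul, mul_assoc, hDe, mul_zero, sub_zero]
  have hne : n * e = 0 := by rw [hndef, mul_assoc, hπe, hwe]
  have hπwD : π * (w * D) = 0 := hπdef ▸ hD.isIdempotentElem_mul_s13.one_sub_mul_self
  have hVe : V * e = α⁻¹ • e := hVdef ▸ u.inv_mul_eq_inv_smul_of_mul_eq_zero hα hu hne
  have hVn : V * n = α • (V * π) - π := hVdef ▸ u.inv_mul_eq_smul_inv_mul_sub hu hnπ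
  set M := α • e + w
  set X := (1 - e) * D + e * (V * π)
  have hMe : M * e = α • e := by rw [add_mul, smul_mul_assoc, he.eq, hwe, add_zero]
  have hMX : M * X = w * D + α • (e * (V * π)) := smul_add_mul_one_sub_mul_add_mul he hwe _ _ _
  have hXM : X * M = (1 - e) * (w * D) + e + e * (V * n) := by
    simp only [M, X, add_mul, mul_add, mul_smul_comm, mul_assoc, hDe, ← hD.1, hπe, hVe, hπw,
      he.eq, smul_smul, mul_inv_cancel₀ hα, one_smul, mul_zero, zero_add]
    abel
  refine ⟨?_, ?_, ?_⟩
  · rw [hMX, hXM, hVn, hπdef]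
    noncomm_ring
  · have hDMX : D * (M * X) = D := by
      rw [hMX, mul_add, ← mul_assoc, hD.2.1, mul_smul_comm, ← mul_assoc, hDe, zero_mul, smul_zero,
        add_zero]
    have hπMX : π * (M * X) = α • (e * (V * π)) := by
      rw [hMX, mul_add, hπwD, zero_add, mul_smul_comm, ← mul_assoc, hπe]
    rw [mul_assoc, add_mul, mul_assoc, hDMX, mul_assoc, mul_assoc, hπMX, mul_smul_comm,
      ← mul_assoc V, hVe, smul_mul_assoc, mul_smul_comm, mul_smul_comm, smul_smul,
      mul_inv_cancel₀ hα, one_smul, ← mul_assoc, he.eq]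
  · have hq : M * (1 - M * X) = n + e * ((-α) • V) * n := by
      have hMπ : M * π = α • (e * π) + n := by rw [add_mul, smul_mul_assoc, hndef]
      have hMeVπ : M * (e * (V * π)) = α • (e * (V * π)) := by
        rw [← mul_assoc, hMe, smul_mul_assoc]
      have hπMX : 1 - M * X = π - α • (e * (V * π)) := by rw [hMX, hπdef]; abel
      rw [hπMX, mul_sub, hMπ, mul_smul_comm, hMeVπ, mul_smul_comm, smul_mul_assoc, mul_assoc, hVn,
        mul_sub, mul_smul_comm]
      module
    rw [hq]
    exact spectralRadius_add_mul_eq_zero hn hne _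

lemma GDrazinInvertible.smul_idempotent_add {e w : A} (he : IsIdempotentElem e)
    (hwe : w * e = 0) {α : ℂ} (hα : α ≠ 0) (h : GDrazinInvertible w) :
    GDrazinInvertible (α • e + w) := by
  obtain ⟨D, hD⟩ := h
  obtain ⟨u, hu⟩ := isUnit_algebraMap_sub_of_spectralRadius_eq_zero hD.2.2 hα
  exact ⟨_, hD.smul_idempotent_add he hwe hα u hu⟩

lemma gDrazinInvertible_smul_idempotent_add_iff {e w : A} (he : IsIdempotentElem e)
    (hwe : w * e = 0) {α : ℂ} (hα : α ≠ 0) :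
    GDrazinInvertible (α • e + w) ↔ GDrazinInvertible w :=
  ⟨.of_smul_idempotent_add he hwe hα, .smul_idempotent_add he hwe hα⟩

lemma isGDrazinInverse_op_iff {a b : A} :
    IsGDrazinInverse (op a) (op b) ↔ IsGDrazinInverse a b := by
  have hflip : a * b = b * a → (1 - b * a) * a = a * (1 - a * b) := fun h => by
    rw [← h]
    exact ((Commute.one_left a).sub_left ((Commute.refl a).mul_right h).symm).eq
  simp only [IsGDrazinInverse, ← op_mul, op_inj, ← op_one, ← op_sub, spectralRadius_op, mul_assoc]
  constructor
  · rintro ⟨h1, h2, h3⟩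
    exact ⟨h1.symm, h2, hflip h1.symm ▸ h3⟩
  · rintro ⟨h1, h2, h3⟩
    exact ⟨h1.symm, h2, (hflip h1).symm ▸ h3⟩

lemma gDrazinInvertible_op_iff {a : A} : GDrazinInvertible (op a) ↔ GDrazinInvertible a :=
  ⟨fun ⟨b, hb⟩ => ⟨b.unop, isGDrazinInverse_op_iff.mp hb⟩,
    fun ⟨b, hb⟩ => ⟨op b, isGDrazinInverse_op_iff.mpr hb⟩⟩

lemma gDrazinInvertible_smul_idempotent_add_iff' {e w : A} (he : IsIdempotentElem e)
    (hew : e * w = 0) {α : ℂ} (hα : α ≠ 0) :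
    GDrazinInvertible (α • e + w) ↔ GDrazinInvertible w := by
  rw [← gDrazinInvertible_op_iff, ← gDrazinInvertible_op_iff (a := w), op_add, op_smul]
  exact gDrazinInvertible_smul_idempotent_add_iff (by rw [IsIdempotentElem, ← op_mul, he.eq])
    (by rw [← op_mul, hew, op_zero]) hα

end GDrazin

theorem stmt_13_general {A : Type*} [NormedRing A] [NormedAlgebra ℂ A]
    (p q : A) (hp : p * p = p) (hq : q * q = q) (m : ℕ)
    (lam : ℕ → ℂ) (γ₁ : ℂ) (h : lam 1 * γ₁ ≠ 0) :
    GDrazinInvertible (lam 1 • p + γ₁ • q - lam 1 • (p * q) +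
        ∑ i ∈ Finset.Icc 2 m, lam i • ((p * q) ^ (i - 1) * p - (p * q) ^ i)) ↔
      GDrazinInvertible (lam 1 • (1 : A) - lam 1 • (p * q) +
        ∑ i ∈ Finset.Icc 2 m, lam i • ((p * q) ^ (i - 1) * p - (p * q) ^ i)) := by
  set S := ∑ i ∈ Finset.Icc 2 m, lam i • ((p * q) ^ (i - 1) * p - (p * q) ^ i)
  set y : A := lam 1 • 1 + ∑ i ∈ Finset.Icc 2 m, lam i • (q * p) ^ (i - 1)
  have hw : lam 1 • (p - p * q) + S = p * y * (1 - q) := by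
    rw [mul_add, add_mul, Finset.mul_sum, Finset.sum_mul, mul_smul_comm, mul_one, smul_mul_assoc,
      mul_sub, mul_one]
    congr 1
    refine Finset.sum_congr rfl fun i hi => ?_
    obtain ⟨k, rfl⟩ : ∃ k, i = k + 1 := ⟨i - 1, by have := (Finset.mem_Icc.mp hi).1; omega⟩
    rw [mul_smul_comm, smul_mul_assoc, Nat.add_sub_cancel, pow_mul_sub_pow_succ]
  have hwq : p * y * (1 - q) * q = 0 := by
    rw [mul_assoc, IsIdempotentElem.one_sub_mul_self hq, mul_zero]
  have hpw : (1 - p) * (p * y * (1 - q)) = 0 := by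
    rw [← mul_assoc, ← mul_assoc, IsIdempotentElem.one_sub_mul_self hp, zero_mul, zero_mul]
  rw [show lam 1 • p + γ₁ • q - lam 1 • (p * q) + S = γ₁ • q + (lam 1 • (p - p * q) + S) by
      rw [smul_sub]; abel,
    show lam 1 • (1 : A) - lam 1 • (p * q) + S = lam 1 • (1 - p) + (lam 1 • (p - p * q) + S) by
      rw [smul_sub, smul_sub]; abel, hw]
  exact (gDrazinInvertible_smul_idempotent_add_iff hq hwq (right_ne_zero_of_mul h)).trans
    (gDrazinInvertible_smul_idempotent_add_iff' (IsIdempotentElem.one_sub hp) hpw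
      (left_ne_zero_of_mul h)).symm

theorem stmt_13 {A : Type*} [NormedRing A] [NormedAlgebra ℂ A] [CompleteSpace A]
    (p q : A) (hp : p * p = p) (hq : q * q = q) (m : ℕ) (hm : 1 ≤ m)
    (lam : ℕ → ℂ) (γ₁ : ℂ) (h : lam 1 * γ₁ ≠ 0) :
    GDrazinInvertible (lam 1 • p + γ₁ • q - lam 1 • (p * q) +
        ∑ i ∈ Finset.Icc 2 m, lam i • ((p * q) ^ (i - 1) * p - (p * q) ^ i)) ↔
      GDrazinInvertible (lam 1 • (1 : A) - lam 1 • (p * q) +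
        ∑ i ∈ Finset.Icc 2 m, lam i • ((p * q) ^ (i - 1) * p - (p * q) ^ i)) :=
  stmt_13_general p q hp hq m lam γ₁ h
end

section
/- If x is a Drazin invertible element of a complex unital Banach algebra A with Drazin inverse x^d and Drazin index i(x), then for all λ ∈ ℂ with 0 < |λ| < (spectral radius of x^d)⁻¹, the element λ·1 − x is invertible and (λ − x)⁻¹ = Σ_{n=1}^{i(x)} λ^{−n} x^{n−1}(1 − x·x^d) − Σ_{n=0}^{∞} λⁿ (x^d)^{n+1}. -/
open scoped ENNReal

/-- `b` is the Drazin inverse of `a` with Drazin index `k`, i.e. `k` is the least `n`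
with `(a * (1 - a * b)) ^ n = 0`. -/
def IsDrazinInverseIdx {A : Type*} [Ring A] (a b : A) (k : ℕ) : Prop :=
  a * b = b * a ∧ b * a * b = b ∧ (a * (1 - a * b)) ^ k = 0 ∧
    ∀ m : ℕ, (a * (1 - a * b)) ^ m = 0 → k ≤ m

/-!
Write `p = 1 - x xᵈ`, an idempotent commuting with `x`. On the range of `p`, `x` is nilpotent,
`xᵏ p = 0`, so the finite Neumann series `∑ λ⁻ⁿ xⁿ⁻¹ p` inverts `λ - x` there:
`(λ - x) ∑ λ⁻ⁿ xⁿ⁻¹ p = p`. On the complementary range, `(λ - x) xᵈ = -(x xᵈ)(1 - λ xᵈ)`, and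
`1 - λ xᵈ` is invertible with inverse `∑ λⁿ (xᵈ)ⁿ` because `|λ| ρ(xᵈ) < 1`.
Hence `(λ - x)(∑ λ⁻ⁿ xⁿ⁻¹ p - ∑ λⁿ (xᵈ)ⁿ⁺¹) = p + x xᵈ = 1`, and since both factors commute
with `x`, this one-sided inverse is two-sided.
-/

open scoped Ring

theorem Commute.ringInverse_right {M₀ : Type*} [MonoidWithZero M₀] {a b : M₀}
    (h : Commute a b) : Commute a b⁻¹ʳ := by
  by_cases hb : IsUnit b
  · rw [Ring.inverse_of_isUnit hb]
    exact Commute.units_inv_right (by rwa [hb.unit_spec])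
  · simp [Ring.inverse_non_unit b hb]

theorem mul_mul_self_eq_of_drazin {M : Type*} [Semigroup M] {x b : M} (hxb : Commute x b)
    (hbxb : b * x * b = b) : x * b * b = b := by
  rw [hxb.eq, hbxb]

theorem isIdempotentElem_mul_of_drazin {M : Type*} [Semigroup M] {x b : M}
    (hbxb : b * x * b = b) : IsIdempotentElem (x * b) := by
  rw [IsIdempotentElem, mul_assoc, ← mul_assoc b, hbxb]

section Drazin

variable {A : Type*} [Ring A] {x b : A}

theorem Commute.one_sub_self_mul_right (hxb : Commute x b) : Commute x (1 - x * b) :=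
  (Commute.one_right x).sub_right ((Commute.refl x).mul_right hxb)

theorem pow_mul_one_sub_mul_eq_zero_of_drazin (hxb : Commute x b) (hbxb : b * x * b = b)
    {k : ℕ} (hk : (x * (1 - x * b)) ^ k = 0) : x ^ k * (1 - x * b) = 0 := by
  rw [← (isIdempotentElem_mul_of_drazin hbxb).one_sub.pow_succ_eq k, pow_succ, ← mul_assoc,
    ← hxb.one_sub_self_mul_right.mul_pow, hk, zero_mul]

end Drazin

theorem smul_one_sub_mul_sum_Icc_inv_pow_smul_pow {𝕜 A : Type*} [Field 𝕜] [Ring A] [Algebra 𝕜 A]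
    {lam : 𝕜} (hlam : lam ≠ 0) (x : A) (k : ℕ) :
    (lam • (1 : A) - x) * ∑ n ∈ Finset.Icc 1 k, (lam ^ n)⁻¹ • x ^ (n - 1) =
      1 - (lam ^ k)⁻¹ • x ^ k := by
  induction k with
  | zero => simp
  | succ k ih =>
    have hinv : (lam ^ (k + 1))⁻¹ * lam = (lam ^ k)⁻¹ := by field_simp; ring
    rw [Finset.sum_Icc_succ_top (by omega), mul_add, ih, Nat.add_sub_cancel, mul_smul_comm,
      sub_mul, smul_mul_assoc, one_mul, ← pow_succ', smul_sub, smul_smul, hinv]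
    abel

theorem isUnit_smul_one_sub_and_inverse_eq_of_drazin {𝕜 A : Type*} [Field 𝕜] [Ring A]
    [Algebra 𝕜 A] {x b : A} {k : ℕ} (hxb : Commute x b) (hbxb : b * x * b = b)
    (hk : (x * (1 - x * b)) ^ k = 0) {lam : 𝕜} (hlam : lam ≠ 0) (hu : IsUnit (1 - lam • b)) :
    IsUnit (lam • (1 : A) - x) ∧
      (lam • (1 : A) - x)⁻¹ʳ =
        (∑ n ∈ Finset.Icc 1 k, (lam ^ n)⁻¹ • (x ^ (n - 1) * (1 - x * b))) -
          b * (1 - lam • b)⁻¹ʳ := by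
  set S := ∑ n ∈ Finset.Icc 1 k, (lam ^ n)⁻¹ • (x ^ (n - 1) * (1 - x * b))
  have hS : (lam • (1 : A) - x) * S = 1 - x * b := by
    have hS_eq : S = (∑ n ∈ Finset.Icc 1 k, (lam ^ n)⁻¹ • x ^ (n - 1)) * (1 - x * b) := by
      simp only [S, Finset.sum_mul, smul_mul_assoc]
    rw [hS_eq, ← mul_assoc, smul_one_sub_mul_sum_Icc_inv_pow_smul_pow hlam, sub_mul, one_mul,
      smul_mul_assoc, pow_mul_one_sub_mul_eq_zero_of_drazin hxb hbxb hk, smul_zero, sub_zero]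
  have hT : (lam • (1 : A) - x) * (b * (1 - lam • b)⁻¹ʳ) = -(x * b) := by
    have : (lam • (1 : A) - x) * b = -(x * b) * (1 - lam • b) := by
      rw [sub_mul, smul_one_mul, neg_mul, mul_sub, mul_one, mul_smul_comm,
        mul_mul_self_eq_of_drazin hxb hbxb]
      abel
    rw [← mul_assoc, this, mul_assoc, Ring.mul_inverse_cancel _ hu, mul_one]
  have hleft : (lam • (1 : A) - x) * (S - b * (1 - lam • b)⁻¹ʳ) = 1 := by
    rw [mul_sub, hS, hT, sub_neg_eq_add, sub_add_cancel]
  have hxS : Commute x S :=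
    Commute.sum_right _ _ _ fun n _ =>
      (((Commute.refl x).pow_right _).mul_right hxb.one_sub_self_mul_right).smul_right _
  have hxT : Commute x (b * (1 - lam • b)⁻¹ʳ) :=
    hxb.mul_right ((Commute.one_right x).sub_right (hxb.smul_right lam)).ringInverse_right
  have hcomm : Commute (lam • (1 : A) - x) (S - b * (1 - lam • b)⁻¹ʳ) :=
    ((Commute.one_left _).smul_left lam).sub_left (hxS.sub_right hxT)
  let u : Aˣ := ⟨_, _, hleft, hcomm.eq ▸ hleft⟩
  exact ⟨u.isUnit, Ring.inverse_unit u⟩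

theorem hasSum_pow_smul_pow_of_lt_inv_spectralRadius {A : Type*} [NormedRing A]
    [NormedAlgebra ℂ A] [CompleteSpace A] (a : A) {z : ℂ}
    (hz : (‖z‖₊ : ℝ≥0∞) < (spectralRadius ℂ a)⁻¹) :
    HasSum (fun n => z ^ n • a ^ n) (1 - z • a)⁻¹ʳ := by
  obtain ⟨r, hzr, hr⟩ := ENNReal.lt_iff_exists_nnreal_btwn.mp hz
  have hr0 : 0 < r := ENNReal.coe_lt_coe.mp (lt_of_le_of_lt bot_le hzr)
  have hseries := (spectrum.hasFPowerSeriesOnBall_inverse_one_sub_smul ℂ a).exchange_radius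
    ((spectrum.differentiableOn_inverse_one_sub_smul hr).hasFPowerSeriesOnBall hr0)
  simpa [ContinuousMultilinearMap.mkPiRing_apply] using
    hseries.hasSum (mem_eball_zero_iff.mpr (by simpa using hzr))

theorem stmt_17 {A : Type*} [NormedRing A] [NormedAlgebra ℂ A] [CompleteSpace A]
    (x b : A) (k : ℕ) (hx : IsDrazinInverseIdx x b k) (lam : ℂ)
    (hlam : 0 < ‖lam‖) (hlam' : (‖lam‖₊ : ℝ≥0∞) < (spectralRadius ℂ b)⁻¹) :
    IsUnit (lam • (1 : A) - x) ∧
      Ring.inverse (lam • (1 : A) - x) =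
        (∑ n ∈ Finset.Icc 1 k, (lam ^ n)⁻¹ • (x ^ (n - 1) * (1 - x * b))) -
          ∑' n : ℕ, lam ^ n • b ^ (n + 1) := by
  obtain ⟨hxb, hbxb, hk, -⟩ := hx
  have hT : HasSum (fun n => lam ^ n • b ^ (n + 1)) (b * (1 - lam • b)⁻¹ʳ) := by
    simpa only [pow_succ', mul_smul_comm] using
      (hasSum_pow_smul_pow_of_lt_inv_spectralRadius b hlam').mul_left b
  rw [hT.tsum_eq]
  exact isUnit_smul_one_sub_and_inverse_eq_of_drazin hxb hbxb hk (norm_pos_iff.mp hlam)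
    (spectrum.isUnit_one_sub_smul_of_lt_inv_radius hlam')
end
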